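/- arXiv:2603.21625 — 7 statements merged into one kernel-verified Lean document; each statement's English description precedes it below -/
import Mathlib

section
/- The number of permutations of length n avoiding the pattern 321 equals the n-th Catalan number (1/(n+1))·C(2n,n). -/
/-- `f` is an occurrence of the pattern `q` in the permutation `p`:
a strictly increasing choice of positions whose entries are order-isomorphic to `q`. -/
def IsOcc {k n : ℕ} (q : Equiv.Perm (Fin k)) (p : Equiv.Perm (Fin n))
    (f : Fin k → Fin n) : Prop :=
  (∀ i j : Fin k, i < j → f i < f j) ∧ ∀ i j : Fin k, q i < q j ↔ p (f i) < p (f j)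

instance {k n : ℕ} (q : Equiv.Perm (Fin k)) (p : Equiv.Perm (Fin n)) :
    DecidablePred (IsOcc q p) := fun f => by unfold IsOcc; infer_instance

/-- The number of occurrences of the pattern `q` in `p`. -/
def numOcc {k n : ℕ} (q : Equiv.Perm (Fin k)) (p : Equiv.Perm (Fin n)) : ℕ :=
  Fintype.card {f : Fin k → Fin n // IsOcc q p f}

/-- The number of permutations of length `n` avoiding `q`, i.e. `|S_n(q)|`. -/
def avoidersCard (n : ℕ) {k : ℕ} (q : Equiv.Perm (Fin k)) : ℕ :=
  Fintype.card {p : Equiv.Perm (Fin n) // numOcc q p = 0}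

/-- The number of permutations of length `n` with exactly `r` occurrences of `q`,
i.e. `|S_{n,r}(q)|`. -/
def occCard (n r : ℕ) {k : ℕ} (q : Equiv.Perm (Fin k)) : ℕ :=
  Fintype.card {p : Equiv.Perm (Fin n) // numOcc q p = r}

noncomputable def pat231 : Equiv.Perm (Fin 3) := Equiv.ofBijective ![1, 2, 0] (by decide)
noncomputable def pat321 : Equiv.Perm (Fin 3) := Equiv.ofBijective ![2, 1, 0] (by decide)
noncomputable def pat3412 : Equiv.Perm (Fin 4) := Equiv.ofBijective ![2, 3, 0, 1] (by decide)
noncomputable def pat4321 : Equiv.Perm (Fin 4) := Equiv.ofBijective ![3, 2, 1, 0] (by decide)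
noncomputable def pat4213 : Equiv.Perm (Fin 4) := Equiv.ofBijective ![3, 1, 0, 2] (by decide)
noncomputable def pat2413 : Equiv.Perm (Fin 4) := Equiv.ofBijective ![1, 3, 0, 2] (by decide)
noncomputable def pat3142 : Equiv.Perm (Fin 4) := Equiv.ofBijective ![2, 0, 3, 1] (by decide)

def CatF (n : ℕ) : Type :=
  {f : Fin n → Fin n // (∀ i j : Fin n, i ≤ j → f i ≤ f j) ∧ ∀ i : Fin n, (i : ℕ) ≤ (f i : ℕ)}

instance (n : ℕ) : Fintype (CatF n) := by unfold CatF; infer_instance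

theorem card_CatF_zero : Fintype.card (CatF 0) = 1 := by
  have : Unique (CatF 0) := {
    default := ⟨Fin.elim0, by constructor <;> intro i <;> exact i.elim0⟩
    uniq := by rintro ⟨f, hf⟩; apply Subtype.ext; funext i; exact i.elim0 }
  exact Fintype.card_unique

namespace CatF

variable {n : ℕ}

lemma mono' (f : CatF n) {a b : Fin n} (h : (a : ℕ) ≤ b) : (f.1 a : ℕ) ≤ f.1 b :=
  f.2.1 a b (by exact h)

lemma touch_exists (f : CatF (n+1)) : ∃ t : ℕ, ∃ h : t < n+1, (f.1 ⟨t, h⟩ : ℕ) = t := by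
  refine ⟨n, n.lt_succ_self, ?_⟩
  have h1 := f.2.2 ⟨n, n.lt_succ_self⟩
  have h2 := (f.1 ⟨n, n.lt_succ_self⟩).isLt
  simp only [Fin.val_mk] at h1
  omega

def mintouchN (f : CatF (n+1)) : ℕ := Nat.find (touch_exists f)

lemma mintouchN_lt (f : CatF (n+1)) : mintouchN f < n+1 := by
  obtain ⟨h, -⟩ := Nat.find_spec (touch_exists f); exact h

def mintouch (f : CatF (n+1)) : Fin (n+1) := ⟨mintouchN f, mintouchN_lt f⟩

lemma mintouch_self (f : CatF (n+1)) : (f.1 (mintouch f) : ℕ) = mintouchN f := by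
  obtain ⟨h, h2⟩ := Nat.find_spec (touch_exists f); exact h2

lemma mintouch_min (f : CatF (n+1)) {s : ℕ} (hs : s < mintouchN f) (h : s < n+1) :
    (s : ℕ) < f.1 ⟨s, h⟩ := by
  have := Nat.find_min (touch_exists f) hs
  push_neg at this
  have h2 := this h
  have h3 := f.2.2 ⟨s, h⟩
  simp only [Fin.val_mk] at h2 h3
  omega

end CatF
namespace CatF

variable {n : ℕ}

lemma touch_val {f : CatF (n+1)} {t : Fin (n+1)} (hf : mintouch f = t) :
    (f.1 t : ℕ) = (t : ℕ) := by
  have h1 := mintouch_self f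
  rw [hf] at h1
  have h2 : mintouchN f = (t : ℕ) := congrArg Fin.val hf
  rw [h2] at h1; exact h1

lemma touch_lt {f : CatF (n+1)} {t : Fin (n+1)} (hf : mintouch f = t) {s : ℕ}
    (h : s < (t : ℕ)) (hs : s < n+1) : s < f.1 ⟨s, hs⟩ := by
  have h2 : mintouchN f = (t : ℕ) := congrArg Fin.val hf
  exact mintouch_min f (by omega) hs

def fwd1 (t : Fin (n+1)) (f : CatF (n+1)) (hf : mintouch f = t) : CatF (t : ℕ) :=
  ⟨fun j => ⟨(f.1 ⟨(j : ℕ), lt_trans j.2 t.2⟩ : ℕ) - 1, by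
      have ha := touch_lt hf j.2 (lt_trans j.2 t.2)
      have hb := mono' f (a := ⟨(j : ℕ), lt_trans j.2 t.2⟩) (b := t) (le_of_lt j.2)
      have hc := touch_val hf
      omega⟩,
   fun i j hij => by
      have h := mono' f (a := ⟨(i : ℕ), lt_trans i.2 t.2⟩) (b := ⟨(j : ℕ), lt_trans j.2 t.2⟩)
        (by simpa using hij)
      simp only [Fin.mk_le_mk]
      omega,
   fun i => by
      have ha := touch_lt hf i.2 (lt_trans i.2 t.2)
      simp only [Fin.val_mk] at ha ⊢
      omega⟩

def fwd2 (t : Fin (n+1)) (f : CatF (n+1)) (hf : mintouch f = t) : CatF (n - (t : ℕ)) :=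
  ⟨fun j => ⟨(f.1 ⟨(t : ℕ) + 1 + (j : ℕ), by have := j.2; omega⟩ : ℕ) - ((t : ℕ) + 1), by
      have ha := (f.1 ⟨(t : ℕ) + 1 + (j : ℕ), by have := j.2; omega⟩).2
      have hb := f.2.2 ⟨(t : ℕ) + 1 + (j : ℕ), by have := j.2; omega⟩
      have hj := j.2
      simp only [Fin.val_mk] at hb ⊢
      omega⟩,
   fun i j hij => by
      have h := mono' f (a := ⟨(t : ℕ) + 1 + (i : ℕ), by have := i.2; omega⟩)
        (b := ⟨(t : ℕ) + 1 + (j : ℕ), by have := j.2; omega⟩)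
        (by simp only [Fin.val_mk]; have : (i : ℕ) ≤ j := hij; omega)
      simp only [Fin.mk_le_mk]
      omega,
   fun j => by
      have hb := f.2.2 ⟨(t : ℕ) + 1 + (j : ℕ), by have := j.2; omega⟩
      simp only [Fin.val_mk] at hb ⊢
      omega⟩

def bwdf (t : Fin (n+1)) (g₁ : CatF (t : ℕ)) (g₂ : CatF (n - (t : ℕ))) :
    Fin (n+1) → Fin (n+1) := fun i =>
  if h : (i : ℕ) < (t : ℕ) then
    ⟨(g₁.1 ⟨(i : ℕ), h⟩ : ℕ) + 1, by have := (g₁.1 ⟨(i : ℕ), h⟩).2; have := t.2; omega⟩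
  else if h2 : (i : ℕ) = (t : ℕ) then t
  else ⟨(t : ℕ) + 1 + (g₂.1 ⟨(i : ℕ) - ((t : ℕ) + 1), by have := i.2; omega⟩ : ℕ), by
    have := (g₂.1 ⟨(i : ℕ) - ((t : ℕ) + 1), by have := i.2; omega⟩).2; omega⟩

lemma bwdf_lt {t : Fin (n+1)} {g₁ : CatF (t : ℕ)} {g₂ : CatF (n - (t : ℕ))} {i : Fin (n+1)}
    (h : (i : ℕ) < (t : ℕ)) : (bwdf t g₁ g₂ i : ℕ) = (g₁.1 ⟨(i : ℕ), h⟩ : ℕ) + 1 := by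
  simp only [bwdf, dif_pos h]

lemma bwdf_eq {t : Fin (n+1)} {g₁ : CatF (t : ℕ)} {g₂ : CatF (n - (t : ℕ))} {i : Fin (n+1)}
    (h : (i : ℕ) = (t : ℕ)) : bwdf t g₁ g₂ i = t := by
  simp only [bwdf, dif_neg (by omega : ¬ (i : ℕ) < (t : ℕ)), dif_pos h]

lemma bwdf_gt {t : Fin (n+1)} {g₁ : CatF (t : ℕ)} {g₂ : CatF (n - (t : ℕ))} {i : Fin (n+1)}
    (h : (t : ℕ) < (i : ℕ)) : (bwdf t g₁ g₂ i : ℕ) =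
      (t : ℕ) + 1 + (g₂.1 ⟨(i : ℕ) - ((t : ℕ) + 1), by have := i.2; omega⟩ : ℕ) := by
  simp only [bwdf, dif_neg (by omega : ¬ (i : ℕ) < (t : ℕ)),
    dif_neg (by omega : ¬ (i : ℕ) = (t : ℕ))]

def bwd (t : Fin (n+1)) (g₁ : CatF (t : ℕ)) (g₂ : CatF (n - (t : ℕ))) : CatF (n+1) :=
  ⟨bwdf t g₁ g₂, by
    intro i j hij
    have hij' : (i : ℕ) ≤ (j : ℕ) := hij
    rw [Fin.le_def]
    rcases lt_trichotomy (i : ℕ) (t : ℕ) with h1 | h1 | h1 <;>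
      rcases lt_trichotomy (j : ℕ) (t : ℕ) with h2 | h2 | h2
    · rw [bwdf_lt h1, bwdf_lt h2]
      have := g₁.2.1 ⟨(i : ℕ), h1⟩ ⟨(j : ℕ), h2⟩ (by simpa using hij')
      simp only [Fin.le_def] at this
      omega
    · rw [bwdf_lt h1, bwdf_eq h2]
      have := (g₁.1 ⟨(i : ℕ), h1⟩).2
      omega
    · rw [bwdf_lt h1, bwdf_gt h2]
      have := (g₁.1 ⟨(i : ℕ), h1⟩).2
      omega
    · omega
    · rw [bwdf_eq h1, bwdf_eq h2]
    · rw [bwdf_eq h1, bwdf_gt h2]; omega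
    · omega
    · omega
    · rw [bwdf_gt h1, bwdf_gt h2]
      have := g₂.2.1 ⟨(i : ℕ) - ((t : ℕ) + 1), by have := i.2; omega⟩
        ⟨(j : ℕ) - ((t : ℕ) + 1), by have := j.2; omega⟩ (by simp only [Fin.mk_le_mk]; omega)
      simp only [Fin.le_def, Fin.val_mk] at this
      omega,
   by
    intro i
    rcases lt_trichotomy (i : ℕ) (t : ℕ) with h1 | h1 | h1
    · rw [bwdf_lt h1]
      have := g₁.2.2 ⟨(i : ℕ), h1⟩
      simp only [Fin.val_mk] at this
      omega
    · rw [bwdf_eq h1]; omega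
    · rw [bwdf_gt h1]
      have := g₂.2.2 ⟨(i : ℕ) - ((t : ℕ) + 1), by have := i.2; omega⟩
      simp only [Fin.val_mk] at this
      omega⟩

lemma mintouch_bwd (t : Fin (n+1)) (g₁ : CatF (t : ℕ)) (g₂ : CatF (n - (t : ℕ))) :
    mintouch (bwd t g₁ g₂) = t := by
  apply Fin.ext
  show Nat.find _ = (t : ℕ)
  rw [Nat.find_eq_iff]
  constructor
  · exact ⟨t.2, by rw [show (bwd t g₁ g₂).1 t = bwdf t g₁ g₂ t from rfl, bwdf_eq rfl]⟩
  · rintro s hs ⟨hlt, hval⟩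
    rw [show (bwd t g₁ g₂).1 ⟨s, hlt⟩ = bwdf t g₁ g₂ ⟨s, hlt⟩ from rfl] at hval
    have h := bwdf_lt (t := t) (g₁ := g₁) (g₂ := g₂) (i := ⟨s, hlt⟩) hs
    have := g₁.2.2 ⟨s, hs⟩
    simp only [Fin.val_mk] at h this hval
    omega

end CatF
namespace CatF

variable {n : ℕ}

def equivFiber (t : Fin (n+1)) :
    {f : CatF (n+1) // mintouch f = t} ≃ CatF (t : ℕ) × CatF (n - (t : ℕ)) where
  toFun f := (fwd1 t f.1 f.2, fwd2 t f.1 f.2)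
  invFun g := ⟨bwd t g.1 g.2, mintouch_bwd t g.1 g.2⟩
  left_inv := by
    rintro ⟨f, hf⟩
    apply Subtype.ext
    apply Subtype.ext
    funext i
    apply Fin.ext
    show (bwdf t (fwd1 t f hf) (fwd2 t f hf) i : ℕ) = ((f.1 i : Fin (n+1)) : ℕ)
    rcases lt_trichotomy (i : ℕ) (t : ℕ) with h1 | h1 | h1
    · rw [bwdf_lt h1]
      show ((f.1 ⟨(i : ℕ), _⟩ : Fin (n+1)) : ℕ) - 1 + 1 = _
      have ha := touch_lt hf h1 i.2
      have : (⟨(i : ℕ), lt_trans h1 t.2⟩ : Fin (n+1)) = i := Fin.ext rfl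
      rw [show (⟨(i : ℕ), i.2⟩ : Fin (n+1)) = i from Fin.ext rfl] at ha
      rw [show (⟨(i : ℕ), lt_trans (Fin.mk_lt_mk.mpr h1) t.2⟩ : Fin (n+1)) = i from Fin.ext rfl]
      omega
    · have hi : i = t := Fin.ext h1
      rw [bwdf_eq h1, hi, touch_val hf]
    · rw [bwdf_gt h1]
      show (t : ℕ) + 1 + (((f.1 ⟨(t : ℕ) + 1 + ((i : ℕ) - ((t : ℕ) + 1)), _⟩ : Fin (n+1)) : ℕ)
        - ((t : ℕ) + 1)) = _
      have he : (t : ℕ) + 1 + ((i : ℕ) - ((t : ℕ) + 1)) = (i : ℕ) := by omega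
      have hge := f.2.2 i
      rw [show (⟨(t : ℕ) + 1 + ((i : ℕ) - ((t : ℕ) + 1)), _⟩ : Fin (n+1)) = i from Fin.ext he]
      omega
  right_inv := by
    rintro ⟨g₁, g₂⟩
    have hm := mintouch_bwd t g₁ g₂
    apply Prod.ext
    · apply Subtype.ext
      funext j
      apply Fin.ext
      show ((bwdf t g₁ g₂ ⟨(j : ℕ), _⟩ : Fin (n+1)) : ℕ) - 1 = (g₁.1 j : ℕ)
      rw [bwdf_lt (i := ⟨(j : ℕ), lt_trans j.2 t.2⟩) j.2]
      rw [show (⟨(j : ℕ), j.2⟩ : Fin (t : ℕ)) = j from Fin.ext rfl]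
      omega
    · apply Subtype.ext
      funext j
      apply Fin.ext
      show ((bwdf t g₁ g₂ ⟨(t : ℕ) + 1 + (j : ℕ), _⟩ : Fin (n+1)) : ℕ) - ((t : ℕ) + 1)
        = (g₂.1 j : ℕ)
      rw [bwdf_gt (i := ⟨(t : ℕ) + 1 + (j : ℕ), by have := j.2; omega⟩) (by simp; omega)]
      simp only [Fin.val_mk]
      rw [show (⟨(t : ℕ) + 1 + (j : ℕ) - ((t : ℕ) + 1), _⟩ : Fin (n - (t : ℕ))) = j from
        Fin.ext (by simp)]
      omega

theorem card_succ :
    Fintype.card (CatF (n+1)) =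
      ∑ t : Fin (n+1), Fintype.card (CatF (t : ℕ)) * Fintype.card (CatF (n - (t : ℕ))) := by
  rw [← Fintype.card_congr (Equiv.sigmaFiberEquiv (mintouch (n := n))), Fintype.card_sigma]
  congr 1
  funext t
  rw [Fintype.card_congr (equivFiber t), Fintype.card_prod]

theorem card_eq_catalan (n : ℕ) : Fintype.card (CatF n) = catalan n := by
  induction n using Nat.strong_induction_on with
  | _ n ih =>
    match n with
    | 0 => rw [card_CatF_zero, catalan_zero]
    | m + 1 =>
      rw [card_succ, catalan_succ]
      congr 1
      funext t
      rw [ih t (by have := t.2; omega), ih (m - (t : ℕ)) (by omega)]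

end CatF

open Finset

section OrderEmb

variable {α : Type*} [LinearOrder α] {s : Finset α} {k : ℕ} (h : s.card = k)

lemma orderEmb_lt {b : α} {l : Fin k} (hl : (l : ℕ) < (s.filter (· < b)).card) :
    s.orderEmbOfFin h l < b := by
  by_contra hb
  push_neg at hb
  have hsub : s.filter (· < b) ⊆ (Finset.Iio l).image (s.orderEmbOfFin h) := by
    intro y hy
    rw [Finset.mem_filter] at hy
    have hy1 : y ∈ Set.range (s.orderEmbOfFin h) := by
      rw [Finset.range_orderEmbOfFin]; exact hy.1
    obtain ⟨j, rfl⟩ := hy1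
    exact Finset.mem_image.mpr ⟨j, Finset.mem_Iio.mpr
      ((s.orderEmbOfFin h).strictMono.lt_iff_lt.mp (lt_of_lt_of_le hy.2 hb)), rfl⟩
  have hc := Finset.card_le_card hsub
  rw [Finset.card_image_of_injective _ (s.orderEmbOfFin h).injective, Fin.card_Iio] at hc
  omega

lemma orderEmb_rank {x : α} (hx : x ∈ s) :
    ∃ j : Fin k, s.orderEmbOfFin h j = x ∧ (s.filter (· < x)).card = (j : ℕ) := by
  have hx1 : x ∈ Set.range (s.orderEmbOfFin h) := by
    rw [Finset.range_orderEmbOfFin]; exact hx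
  obtain ⟨j, hj⟩ := hx1
  refine ⟨j, hj, ?_⟩
  have heq : s.filter (· < x) = (Finset.Iio j).image (s.orderEmbOfFin h) := by
    ext y
    simp only [Finset.mem_filter, Finset.mem_image, Finset.mem_Iio]
    constructor
    · rintro ⟨hy, hyx⟩
      have hy1 : y ∈ Set.range (s.orderEmbOfFin h) := by
        rw [Finset.range_orderEmbOfFin]; exact hy
      obtain ⟨l, rfl⟩ := hy1
      exact ⟨l, (s.orderEmbOfFin h).strictMono.lt_iff_lt.mp (hj ▸ hyx), rfl⟩
    · rintro ⟨l, hl, refl⟩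
      subst refl
      exact ⟨Finset.orderEmbOfFin_mem s h l, hj ▸ (s.orderEmbOfFin h).strictMono hl⟩
  rw [heq, Finset.card_image_of_injective _ (s.orderEmbOfFin h).injective, Fin.card_Iio]

end OrderEmb

section Perm

open Finset

variable {n : ℕ}

def Avoids (p : Equiv.Perm (Fin n)) : Prop :=
  ∀ i j k : Fin n, i < j → j < k → p j < p i → p k < p j → False

def fmax (p : Equiv.Perm (Fin n)) (i : Fin n) : Fin n :=
  ((Finset.Iic i).image p).max'
    (Finset.Nonempty.image ⟨i, Finset.mem_Iic.mpr le_rfl⟩ p)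

lemma le_fmax (p : Equiv.Perm (Fin n)) {j i : Fin n} (h : j ≤ i) : p j ≤ fmax p i :=
  Finset.le_max' _ _ (Finset.mem_image_of_mem p (Finset.mem_Iic.mpr h))

lemma fmax_exists (p : Equiv.Perm (Fin n)) (i : Fin n) : ∃ j, j ≤ i ∧ p j = fmax p i := by
  have hmem := Finset.max'_mem ((Finset.Iic i).image p)
    (Finset.Nonempty.image ⟨i, Finset.mem_Iic.mpr le_rfl⟩ p)
  rw [Finset.mem_image] at hmem
  obtain ⟨j, hj, hj2⟩ := hmem
  exact ⟨j, Finset.mem_Iic.mp hj, hj2⟩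

lemma fmax_mono (p : Equiv.Perm (Fin n)) : ∀ i j : Fin n, i ≤ j → fmax p i ≤ fmax p j :=
  fun i j hij => Finset.max'_subset _ (Finset.image_subset_image (Finset.Iic_subset_Iic.mpr hij))

lemma self_le_fmax (p : Equiv.Perm (Fin n)) (i : Fin n) : (i : ℕ) ≤ (fmax p i : ℕ) := by
  have hsub : (Finset.Iic i).image p ⊆ Finset.Iic (fmax p i) :=
    fun x hx => Finset.mem_Iic.mpr (Finset.le_max' _ _ hx)
  have hc := Finset.card_le_card hsub
  rw [Finset.card_image_of_injective _ p.injective, Fin.card_Iic, Fin.card_Iic] at hc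
  omega

def phi (p : Equiv.Perm (Fin n)) : CatF n := ⟨fmax p, fmax_mono p, self_le_fmax p⟩

def Jump (f : Fin n → Fin n) (i : Fin n) : Prop := ∀ j, j < i → f j < f i

instance (f : Fin n → Fin n) : DecidablePred (Jump f) := fun i => by
  unfold Jump; infer_instance

/-- values of `f`, i.e. values at jumps -/
def Vset (f : Fin n → Fin n) : Finset (Fin n) := Finset.image f Finset.univ

/-- complement of the set of values -/
def Cset (f : Fin n → Fin n) : Finset (Fin n) := (Vset f)ᶜ

/-- rank of a position among non-jumps -/
def rnk (f : Fin n → Fin n) (i : Fin n) : ℕ :=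
  ((Finset.Iio i).filter (fun j => ¬ Jump f j)).card

end Perm

section Counting

open Finset

variable {n : ℕ} (g : CatF n)

lemma exists_jump_min {v : Fin n} (hv : v ∈ Vset g.1) :
    ∃ i, Jump g.1 i ∧ g.1 i = v ∧ ∀ j, g.1 j = v → i ≤ j := by
  have hne : (Finset.univ.filter (fun j => g.1 j = v)).Nonempty := by
    rw [Vset, Finset.mem_image] at hv
    obtain ⟨i, -, hi⟩ := hv
    exact ⟨i, by simp [hi]⟩
  set i := (Finset.univ.filter (fun j => g.1 j = v)).min' hne with hi
  have himem := Finset.min'_mem _ hne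
  rw [Finset.mem_filter] at himem
  refine ⟨i, ?_, himem.2, fun j hj => Finset.min'_le _ _ (by simp [hj])⟩
  intro j hj
  have hle : g.1 j ≤ g.1 i := g.2.1 j i (le_of_lt hj)
  rcases lt_or_eq_of_le hle with h | h
  · exact h
  · exfalso
    have : i ≤ j := Finset.min'_le _ _ (by simp [h ▸ himem.2])
    exact absurd hj (not_lt.mpr this)

lemma jump_inj : Set.InjOn g.1 {i | Jump g.1 i} := by
  intro i hi j hj hij
  rcases lt_trichotomy i j with h | h | h
  · exact absurd (hj i h) (by rw [hij]; exact lt_irrefl _)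
  · exact h
  · exact absurd (hi j h) (by rw [hij]; exact lt_irrefl _)

lemma card_jump_Iic (t : Fin n) :
    ((Finset.Iic t).filter (Jump g.1)).card =
      ((Finset.Iic (g.1 t)).filter (· ∈ Vset g.1)).card := by
  apply Finset.card_bij (fun i _ => g.1 i)
  · intro i hi
    rw [Finset.mem_filter, Finset.mem_Iic] at hi ⊢
    exact ⟨g.2.1 i t hi.1, Finset.mem_image_of_mem _ (Finset.mem_univ i)⟩
  · intro i hi j hj hij
    rw [Finset.mem_filter] at hi hj
    exact jump_inj g hi.2 hj.2 hij
  · intro v hv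
    rw [Finset.mem_filter, Finset.mem_Iic] at hv
    obtain ⟨i, hji, hfi, hmin⟩ := exists_jump_min g hv.2
    refine ⟨i, Finset.mem_filter.mpr ⟨Finset.mem_Iic.mpr ?_, hji⟩, hfi⟩
    by_contra hti
    push_neg at hti
    have h1 : g.1 t ≤ g.1 i := g.2.1 t i (le_of_lt hti)
    have h2 : g.1 t = v := le_antisymm (hfi ▸ h1) hv.1
    exact absurd hti (not_lt.mpr (hmin t h2))

lemma card_V_eq : (Vset g.1).card = (Finset.univ.filter (Jump g.1)).card := by
  apply Finset.card_bij (fun (v : Fin n) (hv : v ∈ Vset g.1) =>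
    (exists_jump_min g hv).choose)
  · intro v hv
    exact Finset.mem_filter.mpr ⟨Finset.mem_univ _, (exists_jump_min g hv).choose_spec.1⟩
  · intro v hv w hw hvw
    rw [← (exists_jump_min g hv).choose_spec.2.1, ← (exists_jump_min g hw).choose_spec.2.1, hvw]
  · intro i hi
    rw [Finset.mem_filter] at hi
    refine ⟨g.1 i, Finset.mem_image_of_mem _ (Finset.mem_univ i), ?_⟩
    have h1 := (exists_jump_min g (Finset.mem_image_of_mem g.1
      (Finset.mem_univ i))).choose_spec
    exact jump_inj g h1.1 hi.2 h1.2.1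

lemma rnk_lt_cardC {i : Fin n} (hi : ¬ Jump g.1 i) : rnk g.1 i < (Cset g.1).card := by
  have h1 : insert i ((Finset.Iio i).filter (fun j => ¬ Jump g.1 j)) ⊆
      Finset.univ.filter (fun j => ¬ Jump g.1 j) := by
    intro x hx
    rw [Finset.mem_insert] at hx
    rcases hx with rfl | hx
    · exact Finset.mem_filter.mpr ⟨Finset.mem_univ _, hi⟩
    · rw [Finset.mem_filter] at hx ⊢
      exact ⟨Finset.mem_univ _, hx.2⟩
  have h2 := Finset.card_le_card h1
  rw [Finset.card_insert_of_notMem (by simp)] at h2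
  have h3 := Finset.card_filter_add_card_filter_not
    (s := (Finset.univ : Finset (Fin n))) (p := Jump g.1)
  have h4 : (Cset g.1).card = n - (Vset g.1).card := by
    rw [Cset, Finset.card_compl, Fintype.card_fin]
  have h5 := card_V_eq g
  have h6 : (Finset.univ : Finset (Fin n)).card = n := by simp
  have h7 : (Vset g.1).card ≤ n := le_trans (Finset.card_le_card (Finset.subset_univ _))
    (le_of_eq h6)
  rw [rnk]
  omega

lemma rnk_strict_mono {i j : Fin n} (hij : i < j) (hi : ¬ Jump g.1 i) :
    rnk g.1 i < rnk g.1 j := by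
  have h1 : insert i ((Finset.Iio i).filter (fun k => ¬ Jump g.1 k)) ⊆
      (Finset.Iio j).filter (fun k => ¬ Jump g.1 k) := by
    intro x hx
    rw [Finset.mem_insert] at hx
    rcases hx with rfl | hx
    · exact Finset.mem_filter.mpr ⟨Finset.mem_Iio.mpr hij, hi⟩
    · rw [Finset.mem_filter, Finset.mem_Iio] at hx ⊢
      exact ⟨lt_trans hx.1 hij, hx.2⟩
  have h2 := Finset.card_le_card h1
  rw [Finset.card_insert_of_notMem (by simp)] at h2
  rw [rnk, rnk]
  omega

lemma dominance {i : Fin n} (hi : ¬ Jump g.1 i) :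
    rnk g.1 i < ((Cset g.1).filter (· < g.1 i)).card := by
  have hA := card_jump_Iic g i
  have hB := Finset.card_filter_add_card_filter_not
    (s := Finset.Iic i) (p := Jump g.1)
  rw [Fin.card_Iic] at hB
  have hC : ((Finset.Iic i).filter (fun j => ¬ Jump g.1 j)).card = rnk g.1 i + 1 := by
    rw [← Finset.Iio_insert, Finset.filter_insert, if_pos hi,
      Finset.card_insert_of_notMem (by simp), rnk]
  have hD : ((Finset.Iic (g.1 i)).filter (· ∈ Vset g.1)).card =
      ((Finset.Iio (g.1 i)).filter (· ∈ Vset g.1)).card + 1 := by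
    rw [← Finset.Iio_insert, Finset.filter_insert,
      if_pos (show g.1 i ∈ Vset g.1 from Finset.mem_image_of_mem _ (Finset.mem_univ i)),
      Finset.card_insert_of_notMem (by simp)]
  have hE : ((Cset g.1).filter (· < g.1 i)).card =
      ((Finset.Iio (g.1 i)).filter (fun x => ¬ x ∈ Vset g.1)).card := by
    congr 1
    ext x
    simp only [Finset.mem_filter, Finset.mem_Iio, Cset, Finset.mem_compl, and_comm]
  have hF := Finset.card_filter_add_card_filter_not
    (s := Finset.Iio (g.1 i)) (p := (· ∈ Vset g.1))
  rw [Fin.card_Iio] at hF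
  have hd := g.2.2 i
  omega

end Counting

section Psi

open Finset

variable {n : ℕ} (g : CatF n)

def psi : Fin n → Fin n := fun i =>
  if h : Jump g.1 i then g.1 i
  else (Cset g.1).orderEmbOfFin rfl ⟨rnk g.1 i, rnk_lt_cardC g h⟩

lemma psi_jump {i : Fin n} (h : Jump g.1 i) : psi g i = g.1 i := dif_pos h

lemma psi_nonjump {i : Fin n} (h : ¬ Jump g.1 i) :
    psi g i = (Cset g.1).orderEmbOfFin rfl ⟨rnk g.1 i, rnk_lt_cardC g h⟩ := dif_neg h

lemma psi_nonjump_lt {i : Fin n} (h : ¬ Jump g.1 i) : psi g i < g.1 i := by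
  rw [psi_nonjump g h]
  exact orderEmb_lt rfl (dominance g h)

lemma psi_le (i : Fin n) : psi g i ≤ g.1 i := by
  by_cases h : Jump g.1 i
  · rw [psi_jump g h]
  · exact le_of_lt (psi_nonjump_lt g h)

lemma psi_nonjump_mem {i : Fin n} (h : ¬ Jump g.1 i) : psi g i ∈ Cset g.1 := by
  rw [psi_nonjump g h]
  exact Finset.orderEmbOfFin_mem _ rfl _

lemma psi_injective : Function.Injective (psi g) := by
  intro i j hij
  by_contra hne
  wlog hlt : i < j generalizing i j
  · exact this hij.symm (Ne.symm hne) (lt_of_le_of_ne (not_lt.mp hlt) (Ne.symm hne))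
  by_cases hi : Jump g.1 i <;> by_cases hj : Jump g.1 j
  · rw [psi_jump g hi, psi_jump g hj] at hij
    exact absurd (hj i hlt) (by rw [hij]; exact lt_irrefl _)
  · have h1 := psi_nonjump_mem g hj
    rw [← hij, psi_jump g hi] at h1
    rw [Cset, Finset.mem_compl] at h1
    exact h1 (Finset.mem_image_of_mem _ (Finset.mem_univ i))
  · have h1 := psi_nonjump_mem g hi
    rw [hij, psi_jump g hj] at h1
    rw [Cset, Finset.mem_compl] at h1
    exact h1 (Finset.mem_image_of_mem _ (Finset.mem_univ j))
  · rw [psi_nonjump g hi, psi_nonjump g hj] at hij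
    have h1 := ((Cset g.1).orderEmbOfFin rfl).injective hij
    have h2 : rnk g.1 i = rnk g.1 j := congrArg Fin.val h1
    exact absurd h2 (ne_of_lt (rnk_strict_mono g hlt hi))

noncomputable def psiP : Equiv.Perm (Fin n) :=
  Equiv.ofBijective (psi g) (Finite.injective_iff_bijective.mp (psi_injective g))

lemma psiP_apply (i : Fin n) : psiP g i = psi g i := rfl

lemma avoids_psiP : Avoids (psiP g) := by
  intro i j k hij hjk h1 h2
  simp only [psiP, Equiv.ofBijective_apply] at h1 h2
  have hj : ¬ Jump g.1 j := by
    intro hj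
    have := psi_le g i
    have h3 : psi g i ≤ g.1 j := le_trans this (g.2.1 i j (le_of_lt hij))
    rw [← psi_jump g hj] at h3
    exact absurd h1 (not_lt.mpr h3)
  have hk : ¬ Jump g.1 k := by
    intro hk
    have := psi_le g j
    have h3 : psi g j ≤ g.1 k := le_trans this (g.2.1 j k (le_of_lt hjk))
    rw [← psi_jump g hk] at h3
    exact absurd h2 (not_lt.mpr h3)
  rw [psi_nonjump g hj, psi_nonjump g hk] at h2
  have h3 : rnk g.1 j < rnk g.1 k := rnk_strict_mono g hjk hj
  have h4 := ((Cset g.1).orderEmbOfFin rfl).strictMono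
    (show (⟨rnk g.1 j, rnk_lt_cardC g hj⟩ : Fin (Cset g.1).card) <
      ⟨rnk g.1 k, rnk_lt_cardC g hk⟩ from h3)
  exact absurd h2 (not_lt.mpr (le_of_lt h4))

lemma fmax_psiP : ∀ i, fmax (psiP g) i = g.1 i := by
  intro i
  -- the largest jump position ≤ i
  have hne : ((Finset.Iic i).filter (Jump g.1)).Nonempty := by
    refine ⟨⟨0, lt_of_le_of_lt (Nat.zero_le _) i.2⟩, Finset.mem_filter.mpr
      ⟨Finset.mem_Iic.mpr (by rw [Fin.le_def]; exact Nat.zero_le _), ?_⟩⟩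
    intro j hj
    exact absurd hj (by rw [Fin.lt_def]; exact Nat.not_lt_zero _)
  set t := ((Finset.Iic i).filter (Jump g.1)).max' hne with ht
  have htmem := Finset.max'_mem _ hne
  rw [Finset.mem_filter, Finset.mem_Iic] at htmem
  have key : ∀ v : ℕ, ∀ s : Fin n, (s : ℕ) = v → s ≤ i → g.1 s ≤ g.1 t := by
    intro v
    induction v using Nat.strong_induction_on with
    | _ v ih =>
      intro s hs hsi
      by_cases hjs : Jump g.1 s
      · have : s ≤ t := Finset.le_max' _ _ (Finset.mem_filter.mpr
          ⟨Finset.mem_Iic.mpr hsi, hjs⟩)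
        exact g.2.1 s t this
      · unfold Jump at hjs
        push_neg at hjs
        obtain ⟨k, hk, hks⟩ := hjs
        have h1 : g.1 s ≤ g.1 k := hks
        exact le_trans h1 (ih (k : ℕ) (hs ▸ hk) k rfl (le_trans (le_of_lt hk) hsi))
  apply le_antisymm
  · apply Finset.max'_le
    intro y hy
    rw [Finset.mem_image] at hy
    obtain ⟨j, hj, rfl⟩ := hy
    rw [Finset.mem_Iic] at hj
    exact le_trans (psi_le g j) (g.2.1 j i hj)
  · have h1 : g.1 i ≤ g.1 t := key (i : ℕ) i rfl le_rfl
    have h2 : g.1 t ≤ g.1 i := g.2.1 t i htmem.1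
    have h3 : g.1 i = g.1 t := le_antisymm h1 h2
    rw [h3, ← psi_jump g htmem.2]
    exact le_fmax (psiP g) htmem.1

end Psi

section Recover

open Finset

variable {n : ℕ} (p : Equiv.Perm (Fin n))

lemma orderEmbOfFin_val_eq {α : Type*} [LinearOrder α] {s : Finset α} {k₁ k₂ : ℕ}
    (h₁ : s.card = k₁) (h₂ : s.card = k₂) (j₁ : Fin k₁) (j₂ : Fin k₂)
    (hj : (j₁ : ℕ) = (j₂ : ℕ)) : s.orderEmbOfFin h₁ j₁ = s.orderEmbOfFin h₂ j₂ := by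
  subst h₁
  subst h₂
  congr 1
  exact Fin.ext hj

lemma jump_fixed {i : Fin n} (h : Jump (fmax p) i) : p i = fmax p i := by
  obtain ⟨j, hj, hj2⟩ := fmax_exists p i
  rcases lt_or_eq_of_le hj with hlt | rfl
  · exfalso
    have h1 : p j ≤ fmax p j := le_fmax p le_rfl
    have h2 := h j hlt
    rw [hj2] at h1
    exact absurd h2 (not_lt.mpr h1)
  · exact hj2

lemma nonjump_witness {i : Fin n} (h : ¬ Jump (fmax p) i) :
    ∃ b, b < i ∧ p i < p b := by
  unfold Jump at h
  push_neg at h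
  obtain ⟨a, ha, ha2⟩ := h
  have h1 : fmax p a = fmax p i := le_antisymm (fmax_mono p a i (le_of_lt ha)) ha2
  obtain ⟨b, hb, hb2⟩ := fmax_exists p a
  have h2 : p i ≤ fmax p i := le_fmax p le_rfl
  have h3 : b < i := lt_of_le_of_lt hb ha
  refine ⟨b, h3, ?_⟩
  rcases lt_or_eq_of_le (hb2 ▸ h1 ▸ h2 : p i ≤ p b) with h4 | h4
  · exact h4
  · exact absurd (p.injective h4).symm (ne_of_lt h3)

lemma p_mono_nonjump (hp : Avoids p) {i j : Fin n} (hij : i < j)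
    (hi : ¬ Jump (fmax p) i) : p i < p j := by
  obtain ⟨b, hb, hb2⟩ := nonjump_witness p hi
  rcases lt_trichotomy (p i) (p j) with h | h | h
  · exact h
  · exact absurd (p.injective h) (ne_of_lt hij)
  · exact absurd h (by intro hh; exact hp b i j hb hij hb2 hh)

lemma p_nonjump_mem_C (hp : Avoids p) {i : Fin n} (hi : ¬ Jump (fmax p) i) :
    p i ∈ Cset (fmax p) := by
  rw [Cset, Finset.mem_compl]
  intro hmem
  obtain ⟨s, hs, hs2, -⟩ := exists_jump_min (phi p) hmem
  have h1 : p s = p i := by rw [jump_fixed p hs]; exact hs2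
  exact hi (p.injective h1 ▸ hs)

lemma card_nonjump (hp : Avoids p) :
    (Finset.univ.filter (fun j => ¬ Jump (fmax p) j)).card = (Cset (fmax p)).card := by
  have h3 := Finset.card_filter_add_card_filter_not
    (s := (Finset.univ : Finset (Fin n))) (p := Jump (fmax p))
  have h4 : (Cset (fmax p)).card = n - (Vset (fmax p)).card := by
    rw [Cset, Finset.card_compl, Fintype.card_fin]
  have h5 : (Vset (fmax p)).card = (Finset.univ.filter (Jump (fmax p))).card :=
    card_V_eq (phi p)
  have h6 : (Finset.univ : Finset (Fin n)).card = n := by simp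
  have h7 : (Vset (fmax p)).card ≤ n := le_trans
    (Finset.card_le_card (Finset.subset_univ _)) (le_of_eq h6)
  omega

lemma psi_phi (hp : Avoids p) : psi (phi p) = ⇑p := by
  funext i
  by_cases hi : Jump (fmax p) i
  · rw [psi_jump (phi p) hi]
    exact (jump_fixed p hi).symm
  · rw [psi_nonjump (phi p) hi]
    set N := Finset.univ.filter (fun j => ¬ Jump (fmax p) j) with hN
    have hNC : N.card = (Cset (fmax p)).card := card_nonjump p hp
    set h : Fin N.card → Fin n := fun k => p (N.orderEmbOfFin rfl k) with hh
    have hmono : StrictMono h := by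
      intro a b hab
      have h1 := (N.orderEmbOfFin rfl).strictMono hab
      have h2 : N.orderEmbOfFin rfl a ∈ N := Finset.orderEmbOfFin_mem _ rfl a
      exact p_mono_nonjump p hp h1 (Finset.mem_filter.mp h2).2
    have hmem : ∀ k, h k ∈ Cset (fmax p) := by
      intro k
      have h2 : N.orderEmbOfFin rfl k ∈ N := Finset.orderEmbOfFin_mem _ rfl k
      exact p_nonjump_mem_C p hp (Finset.mem_filter.mp h2).2
    have huniq := Finset.orderEmbOfFin_unique hNC.symm hmem hmono
    have hiN : i ∈ N := Finset.mem_filter.mpr ⟨Finset.mem_univ _, hi⟩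
    obtain ⟨j, hj1, hj2⟩ := orderEmb_rank (rfl : N.card = N.card) hiN
    have hrnk : rnk (fmax p) i = (j : ℕ) := by
      rw [← hj2, rnk]
      congr 1
      ext x
      simp only [hN, Finset.mem_filter, Finset.mem_Iio, Finset.mem_univ, true_and, and_comm]
    have : p i = h j := by rw [hh]; simp only; rw [hj1]
    rw [this, huniq]
    exact (orderEmbOfFin_val_eq hNC.symm rfl j ⟨rnk (fmax p) i, _⟩ (by simp only [Fin.val_mk]; rw [hrnk])).symm

end Recover


section Final

variable {n : ℕ}

instance : DecidablePred (Avoids (n := n)) := fun p => by unfold Avoids; infer_instance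

noncomputable def avoidEquiv : {p : Equiv.Perm (Fin n) // Avoids p} ≃ CatF n where
  toFun p := phi p.1
  invFun g := ⟨psiP g, avoids_psiP g⟩
  left_inv := by
    rintro ⟨p, hp⟩
    apply Subtype.ext
    apply Equiv.ext
    intro i
    show psi (phi p) i = p i
    rw [psi_phi p hp]
  right_inv := by
    intro g
    apply Subtype.ext
    funext i
    exact fmax_psiP g i

lemma numOcc_zero_iff (p : Equiv.Perm (Fin n)) : numOcc pat321 p = 0 ↔ Avoids p := by
  rw [numOcc, Fintype.card_eq_zero_iff, isEmpty_subtype]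
  constructor
  · intro h i j k hij hjk h1 h2
    apply h ![i, j, k]
    refine ⟨?_, ?_⟩
    · intro a b hab
      fin_cases a <;> fin_cases b <;>
        first
          | exact absurd hab (by decide)
          | exact hij
          | exact hjk
          | exact lt_trans hij hjk
    · intro a b
      fin_cases a <;> fin_cases b <;> constructor <;> intro hh <;>
        first
          | exact absurd hh (by decide)
          | exact h1
          | exact h2
          | exact lt_trans h2 h1
          | exact absurd hh (lt_asymm h1)
          | exact absurd hh (lt_asymm h2)
          | exact absurd hh (lt_asymm (lt_trans h2 h1))
          | exact absurd hh (lt_irrefl _)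
          | decide
  · intro h f hf
    have m01 : f 0 < f 1 := hf.1 0 1 (by decide)
    have m12 : f 1 < f 2 := hf.1 1 2 (by decide)
    have o10 : p (f 1) < p (f 0) := (hf.2 1 0).mp (by decide)
    have o21 : p (f 2) < p (f 1) := (hf.2 2 1).mp (by decide)
    exact h (f 0) (f 1) (f 2) m01 m12 o10 o21

theorem avoidersCard_eq_catalan : avoidersCard n pat321 = catalan n := by
  rw [avoidersCard]
  rw [Fintype.card_congr (Equiv.subtypeEquivRight (fun p => numOcc_zero_iff p))]
  rw [Fintype.card_congr (avoidEquiv (n := n))]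
  exact CatF.card_eq_catalan n

end Final

/-- The number of permutations of length n avoiding 321 is the n-th Catalan number
`(1/(n+1)) * C(2n, n)`. -/
theorem card_avoiders_321 (n : ℕ) :
    (avoidersCard n pat321 : ℚ) = (1 / (n + 1)) * Nat.choose (2 * n) n := by
  have h1 : avoidersCard n pat321 = catalan n := avoidersCard_eq_catalan
  have h2 : (n + 1) * catalan n = (2 * n).choose n := succ_mul_catalan_eq_centralBinom n
  have hn : ((n : ℚ) + 1) ≠ 0 := by positivity
  rw [h1, one_div, inv_mul_eq_div, eq_div_iff hn]
  have h3 : (((n + 1) * catalan n : ℕ) : ℚ) = (((2 * n).choose n : ℕ) : ℚ) :=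
    congrArg Nat.cast h2
  push_cast at h3 ⊢
  linarith
end

section
/- Let p be a permutation of length n containing exactly r ≥ 1 occurrences of the pattern 21, such that no two occurrences of 21 share an entry. Let (i, j) with i < j be the occurrence of 21 whose first position i is leftmost among all occurrences. Then j = i + 1 and p_i = p_j + 1, i.e., the two entries of this occurrence are adjacent in position and consecutive in value. -/
/-- `(x.1, x.2)` is an inversion (an occurrence of the pattern 21) in `p`. -/
def IsInv {n : ℕ} (p : Equiv.Perm (Fin n)) (x : Fin n × Fin n) : Prop :=
  x.1 < x.2 ∧ p x.2 < p x.1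

instance {n : ℕ} (p : Equiv.Perm (Fin n)) : DecidablePred (IsInv p) := fun x => by
  unfold IsInv; infer_instance

/-- No two occurrences of 21 in `p` share an entry (a position). -/
def NoSharedInv {n : ℕ} (p : Equiv.Perm (Fin n)) : Prop :=
  ∀ x y : Fin n × Fin n, IsInv p x → IsInv p y → x ≠ y →
    x.1 ≠ y.1 ∧ x.1 ≠ y.2 ∧ x.2 ≠ y.1 ∧ x.2 ≠ y.2

/-- If `p` has exactly `r ≥ 1` occurrences of 21, no two sharing an entry, and `(i, j)` is the
occurrence of 21 whose first position is leftmost, then `j = i + 1` and `p i = p j + 1`. -/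
theorem leftmost_inversion_adjacent {n r : ℕ} (hr : 1 ≤ r) (p : Equiv.Perm (Fin n))
    (hcount : (Finset.univ.filter fun x : Fin n × Fin n => IsInv p x).card = r)
    (hdisj : NoSharedInv p)
    (i j : Fin n) (hinv : IsInv p (i, j))
    (hleft : ∀ x : Fin n × Fin n, IsInv p x → i ≤ x.1) :
    (j : ℕ) = (i : ℕ) + 1 ∧ (p i : ℕ) = (p j : ℕ) + 1 := by
  obtain ⟨hij, hpij⟩ := hinv
  -- no k strictly between i and j
  have hmid : ∀ k : Fin n, i < k → k < j → False := by
    intro k hik hkj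
    rcases lt_trichotomy (p k) (p i) with h | h | h
    · have hx : IsInv p (i, k) := ⟨hik, h⟩
      have hne : (i, k) ≠ ((i, j) : Fin n × Fin n) := by
        intro he; exact absurd (congrArg Prod.snd he) (ne_of_lt hkj)
      exact (hdisj (i, k) (i, j) hx ⟨hij, hpij⟩ hne).1 rfl
    · exact absurd (p.injective h) (ne_of_gt hik)
    · have hx : IsInv p (k, j) := ⟨hkj, lt_trans hpij h⟩
      have hne : (k, j) ≠ ((i, j) : Fin n × Fin n) := by
        intro he; exact absurd (congrArg Prod.fst he) (ne_of_gt hik)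
      exact (hdisj (k, j) (i, j) hx ⟨hij, hpij⟩ hne).2.2.2 rfl
  have hj : (j : ℕ) = (i : ℕ) + 1 := by
    by_contra hne
    have h1 : (i : ℕ) + 1 < (j : ℕ) := lt_of_le_of_ne hij (Ne.symm hne)
    exact hmid ⟨(i : ℕ) + 1, lt_trans h1 j.isLt⟩ (by simp [Fin.lt_def]) (by simpa [Fin.lt_def] using h1)
  refine ⟨hj, ?_⟩
  by_contra hne
  have h1 : (p j : ℕ) + 1 < (p i : ℕ) := lt_of_le_of_ne hpij (Ne.symm hne)
  set v : Fin n := ⟨(p j : ℕ) + 1, lt_trans h1 (p i).isLt⟩ with hv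
  set k : Fin n := p.symm v with hk
  have hpk : p k = v := p.apply_symm_apply v
  have hki : k ≠ i := by
    intro he
    have : p i = v := by rw [← he, hpk]
    rw [this] at h1; simp [hv] at h1
  have hkj : k ≠ j := by
    intro he
    have hpj : p j = v := by rw [← he, hpk]
    have h2 : (p j : ℕ) = (p j : ℕ) + 1 := by simpa [hv] using congrArg Fin.val hpj
    omega
  have hpkj : p j < p k := by rw [hpk]; exact Fin.lt_def.mpr (Nat.lt_succ_self _)
  have hpki : p k < p i := by rw [hpk]; exact Fin.lt_def.mpr h1
  rcases lt_trichotomy k i with h | h | h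
  · have hx : IsInv p (k, j) := ⟨lt_trans h hij, hpkj⟩
    exact absurd (hleft (k, j) hx) (not_le_of_gt h)
  · exact hki h
  · have hkgtj : j < k := by
      rcases lt_trichotomy k j with h2 | h2 | h2
      · exact (hmid k h h2).elim
      · exact absurd h2 hkj
      · exact h2
    have hx : IsInv p (i, k) := ⟨lt_trans hij hkgtj, hpki⟩
    have hne2 : (i, k) ≠ ((i, j) : Fin n × Fin n) := by
      intro he; exact hkj (congrArg Prod.snd he)
    exact (hdisj (i, k) (i, j) hx ⟨hij, hpij⟩ hne2).1 rfl
end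

section
/- For every n ≥ 1 and r ≥ 1, there is an injection from the set of permutations of length n with exactly r occurrences of 21, no two of which share an entry, into the product of {1,...,n} with the set of permutations of length n having exactly r−1 occurrences of 21, no two of which share an entry. Moreover the injection can be chosen so that the image permutation is obtained from the input permutation by swapping two entries. -/
/-- `S*_{n,r}(21)`: permutations of length `n` with exactly `r` occurrences of 21,
no two of which share an entry. -/
def SStar (n r : ℕ) : Type :=
  {p : Equiv.Perm (Fin n) //
    (Finset.univ.filter fun x : Fin n × Fin n => IsInv p x).card = r ∧ NoSharedInv p}

instance (n r : ℕ) : Finite (SStar n r) := by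
  unfold SStar; infer_instance

noncomputable instance (n r : ℕ) : Fintype (SStar n r) := Fintype.ofFinite _

lemma isInv_mk {n : ℕ} {p : Equiv.Perm (Fin n)} {a b : Fin n}
    (h1 : (a : ℕ) < b) (h2 : ((p b : ℕ)) < p a) : IsInv p (a, b) :=
  ⟨h1, h2⟩

lemma adj_of_inv {n : ℕ} {p : Equiv.Perm (Fin n)} (hns : NoSharedInv p)
    {i j : Fin n} (h : IsInv p (i, j)) :
    (j : ℕ) = (i : ℕ) + 1 ∧ ((p i : ℕ)) = (p j : ℕ) + 1 := by
  obtain ⟨hij, hpij⟩ := h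
  have hijv : (i : ℕ) < j := hij
  have hpv : ((p j : ℕ)) < p i := hpij
  have hinv : IsInv p (i, j) := ⟨hij, hpij⟩
  have hj : (j : ℕ) = (i : ℕ) + 1 := by
    by_contra hne
    set k : Fin n := ⟨(i : ℕ) + 1, by omega⟩ with hk
    have hkv : (k : ℕ) = (i : ℕ) + 1 := rfl
    have hki : k ≠ i := by simp [Fin.ext_iff, hkv]
    have hkj : k ≠ j := by simp [Fin.ext_iff, hkv]; omega
    rcases lt_trichotomy (p k) (p j) with hc | hc | hc
    · have hcv : ((p k : ℕ)) < p j := hc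
      have hinv2 : IsInv p (i, k) := isInv_mk (by omega) (by omega)
      have hne2 : (i, j) ≠ (i, k) := by
        simp only [ne_eq, Prod.mk.injEq, not_and]
        exact fun _ => hkj.symm
      exact absurd rfl (hns _ _ hinv hinv2 hne2).1
    · exact hkj (p.injective hc)
    · have hcv : ((p j : ℕ)) < p k := hc
      have hinv2 : IsInv p (k, j) := isInv_mk (by omega) (by omega)
      have hne2 : (i, j) ≠ (k, j) := by
        simp only [ne_eq, Prod.mk.injEq, not_and]
        intro hik
        exact absurd hik.symm hki
      exact absurd rfl (hns _ _ hinv hinv2 hne2).2.2.2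
  refine ⟨hj, ?_⟩
  by_contra hvne
  set v : Fin n := ⟨(p j : ℕ) + 1, by have := (p i).isLt; omega⟩ with hv
  set k : Fin n := p.symm v with hkdef
  have hpk : p k = v := p.apply_symm_apply v
  have hpkv : ((p k : ℕ)) = (p j : ℕ) + 1 := by rw [hpk]
  have hki : k ≠ i := by
    intro hc; rw [hc] at hpkv; omega
  have hkj : k ≠ j := by
    intro hc; rw [hc] at hpkv; omega
  rcases lt_or_gt_of_ne hkj with hc | hc
  · have hcv : (k : ℕ) < j := hc
    have hinv2 : IsInv p (k, j) := isInv_mk (by omega) (by omega)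
    have hne2 : (i, j) ≠ (k, j) := by
      simp only [ne_eq, Prod.mk.injEq, not_and]
      intro hik
      exact absurd hik.symm hki
    exact absurd rfl (hns _ _ hinv hinv2 hne2).2.2.2
  · have hcv : (j : ℕ) < k := hc
    have hinv2 : IsInv p (i, k) := isInv_mk (by omega) (by omega)
    have hne2 : (i, j) ≠ (i, k) := by
      simp only [ne_eq, Prod.mk.injEq, not_and]
      exact fun _ => hkj.symm
    exact absurd rfl (hns _ _ hinv hinv2 hne2).1

lemma swap_inv_iff {n : ℕ} {p : Equiv.Perm (Fin n)} (hns : NoSharedInv p)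
    {i j : Fin n} (h : IsInv p (i, j)) (x : Fin n × Fin n) :
    IsInv (Equiv.swap (p i) (p j) * p) x ↔ IsInv p x ∧ x ≠ (i, j) := by
  obtain ⟨hj, hvadj⟩ := adj_of_inv hns h
  obtain ⟨hij, hpij⟩ := h
  have hijv : (i : ℕ) < j := hij
  have hpv : ((p j : ℕ)) < p i := hpij
  clear hij hpij
  set q := Equiv.swap (p i) (p j) * p with hqdef
  have hqv : ∀ m : Fin n, ((q m : ℕ)) =
      if (m : ℕ) = i then (p j : ℕ) else if (m : ℕ) = j then (p i : ℕ) else (p m : ℕ) := by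
    intro m
    rcases eq_or_ne m i with hmi | hmi
    · subst hmi
      simp [hqdef, Equiv.swap_apply_left]
    · rcases eq_or_ne m j with hmj | hmj
      · subst hmj
        simp only [hqdef, Equiv.Perm.mul_apply, Equiv.swap_apply_right]
        rw [if_neg]
        · simp
        · simp [Fin.ext_iff] at hmi ⊢; omega
      · have h1 : p m ≠ p i := fun hc => hmi (p.injective hc)
        have h2 : p m ≠ p j := fun hc => hmj (p.injective hc)
        simp only [hqdef, Equiv.Perm.mul_apply, Equiv.swap_apply_of_ne_of_ne h1 h2]
        rw [if_neg, if_neg]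
        · simp [Fin.ext_iff] at hmj ⊢; omega
        · simp [Fin.ext_iff] at hmi ⊢; omega
  obtain ⟨k, l⟩ := x
  have hqk := hqv k
  have hql := hqv l
  have hnep : ((k, l) ≠ (i, j)) ↔ ¬((k : ℕ) = i ∧ (l : ℕ) = j) := by
    simp [Prod.ext_iff, Fin.ext_iff]
  have mkc : ∀ (a b : Fin n), ((a : ℕ) = b ∧ ((p a : ℕ)) = p b) ∨ ((a : ℕ) ≠ b ∧ ((p a : ℕ)) ≠ p b) := by
    intro a b
    rcases eq_or_ne a b with hc | hc
    · subst hc; exact Or.inl ⟨rfl, rfl⟩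
    · exact Or.inr ⟨fun hv => hc (Fin.ext hv), fun hv => hc (p.injective (Fin.ext hv))⟩
  have hmain : (((k : ℕ) < l ∧ ((q l : ℕ)) < q k) ↔
      (((k : ℕ) < l ∧ ((p l : ℕ)) < p k) ∧ ¬((k : ℕ) = i ∧ (l : ℕ) = j))) := by
    rcases mkc k i with ⟨c1, c1'⟩ | ⟨c1, c1'⟩ <;>
    rcases mkc k j with ⟨c2, c2'⟩ | ⟨c2, c2'⟩ <;>
    rcases mkc l i with ⟨c3, c3'⟩ | ⟨c3, c3'⟩ <;>
    rcases mkc l j with ⟨c4, c4'⟩ | ⟨c4, c4'⟩ <;>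
    split_ifs at hqk hql <;> omega
  constructor
  · rintro ⟨h1, h2⟩
    have h1v : (k : ℕ) < l := h1
    have h2v : ((q l : ℕ)) < q k := h2
    have := hmain.mp ⟨h1v, h2v⟩
    exact ⟨⟨this.1.1, this.1.2⟩, hnep.mpr this.2⟩
  · rintro ⟨⟨h1, h2⟩, h3⟩
    have h1v : (k : ℕ) < l := h1
    have h2v : ((p l : ℕ)) < p k := h2
    have := hmain.mpr ⟨⟨h1v, h2v⟩, hnep.mp h3⟩
    exact ⟨this.1, this.2⟩

/-- There is an injection from `S*_{n,r}(21)` to `[n] × S*_{n,r-1}(21)` whose permutation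
component is obtained from the input permutation by swapping two entries. -/
theorem exists_injection_SStar (n r : ℕ) (hn : 1 ≤ n) (hr : 1 ≤ r) :
    ∃ ψ : SStar n r → Fin n × SStar n (r - 1),
      Function.Injective ψ ∧
      ∀ p : SStar n r, ∃ a b : Fin n, (ψ p).2.1 = Equiv.swap a b * p.1 := by
  classical
  -- choose an inversion for each element
  have hne : ∀ p : SStar n r,
      (Finset.univ.filter fun x : Fin n × Fin n => IsInv p.1 x).Nonempty := by
    intro p
    rw [← Finset.card_pos, p.2.1]
    omega
  set pick : SStar n r → Fin n × Fin n := fun p => (hne p).choose with hpick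
  have hpickInv : ∀ p : SStar n r, IsInv p.1 (pick p) := by
    intro p
    have := (hne p).choose_spec
    simpa using this
  have hpickInv' : ∀ p : SStar n r, IsInv p.1 ((pick p).1, (pick p).2) := by
    intro p; exact hpickInv p
  -- the swapped permutation
  set Q : SStar n r → Equiv.Perm (Fin n) := fun p =>
    Equiv.swap (p.1 (pick p).1) (p.1 (pick p).2) * p.1 with hQ
  have hQcard : ∀ p : SStar n r,
      (Finset.univ.filter fun x : Fin n × Fin n => IsInv (Q p) x).card = r - 1 := by
    intro p
    have hfe : (Finset.univ.filter fun x : Fin n × Fin n => IsInv (Q p) x)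
        = (Finset.univ.filter fun x : Fin n × Fin n => IsInv p.1 x).erase
            ((pick p).1, (pick p).2) := by
      ext y
      simp only [Finset.mem_filter, Finset.mem_univ, true_and, Finset.mem_erase]
      rw [swap_inv_iff p.2.2 (hpickInv' p) y]
      tauto
    rw [hfe, Finset.card_erase_of_mem, p.2.1]
    simp only [Finset.mem_filter, Finset.mem_univ, true_and]
    exact hpickInv' p
  have hQns : ∀ p : SStar n r, NoSharedInv (Q p) := by
    intro p x y hx hy hxy
    rw [swap_inv_iff p.2.2 (hpickInv' p)] at hx hy
    exact p.2.2 x y hx.1 hy.1 hxy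
  set ψ : SStar n r → Fin n × SStar n (r - 1) := fun p =>
    ((pick p).1, ⟨Q p, hQcard p, hQns p⟩) with hψ
  -- recovery function for injectivity
  set f : Fin n × SStar n (r - 1) → Equiv.Perm (Fin n) := fun z =>
    if h : (z.1 : ℕ) + 1 < n then
      Equiv.swap (z.2.1 ⟨(z.1 : ℕ) + 1, h⟩) (z.2.1 z.1) * z.2.1
    else z.2.1 with hf
  have hrec : ∀ p : SStar n r, f (ψ p) = p.1 := by
    intro p
    obtain ⟨hadj, _⟩ := adj_of_inv p.2.2 (hpickInv' p)
    have hlt : ((pick p).1 : ℕ) + 1 < n := by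
      have := ((pick p).2).isLt
      omega
    have hidx : (⟨((pick p).1 : ℕ) + 1, hlt⟩ : Fin n) = (pick p).2 := by
      apply Fin.ext
      simp [hadj]
    have h1 : (ψ p).2.1 = Q p := rfl
    have h2 : (ψ p).1 = (pick p).1 := rfl
    simp only [hf, hψ, hQ]
    rw [dif_pos hlt]
    simp only [hidx]
    have hQ2 : (Equiv.swap (p.1 (pick p).1) (p.1 (pick p).2) * p.1) (pick p).2
        = p.1 (pick p).1 := by
      simp [Equiv.Perm.mul_apply, Equiv.swap_apply_right]
    have hQ1 : (Equiv.swap (p.1 (pick p).1) (p.1 (pick p).2) * p.1) (pick p).1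
        = p.1 (pick p).2 := by
      simp [Equiv.Perm.mul_apply, Equiv.swap_apply_left]
    rw [hQ2, hQ1, ← mul_assoc]
    rw [Equiv.swap_comm]
    simp [Equiv.swap_mul_self]
  refine ⟨ψ, ?_, ?_⟩
  · intro p p' hpp'
    have : f (ψ p) = f (ψ p') := by rw [hpp']
    rw [hrec p, hrec p'] at this
    exact Subtype.ext this
  · intro p
    exact ⟨p.1 (pick p).1, p.1 (pick p).2, rfl⟩
end

section
/- For every n ≥ 1 and r ≥ 1, the number of permutations of length n with exactly r inversions and no two inversions sharing an entry is at most n times the number of permutations of length n with exactly r−1 inversions and no two inversions sharing an entry. -/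
open Finset Equiv

lemma adj_of_noShared {n : ℕ} {p : Equiv.Perm (Fin n)} (hns : NoSharedInv p)
    {i j : Fin n} (h : IsInv p (i, j)) : (j : ℕ) = (i : ℕ) + 1 := by
  by_contra hne
  have hij : (i : ℕ) < (j : ℕ) := h.1
  have hlt : (i : ℕ) + 1 < (j : ℕ) := by omega
  set k : Fin n := ⟨(i : ℕ) + 1, lt_trans hlt j.isLt⟩ with hk
  have hik : i < k := by simp [Fin.lt_def, hk]
  have hkj : k < j := by simpa [Fin.lt_def, hk] using hlt
  have hki : k ≠ i := ne_of_gt hik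
  have hkj' : k ≠ j := ne_of_lt hkj
  have h1 : ¬ IsInv p (i, k) := by
    intro hinv
    have hne' : (i, j) ≠ (i, k) := by
      simp only [Ne, Prod.mk.injEq, not_and]
      intro _; exact fun hc => hkj' hc.symm
    exact (hns (i, j) (i, k) h hinv hne').1 rfl
  have h2 : ¬ IsInv p (k, j) := by
    intro hinv
    have hne' : (i, j) ≠ (k, j) := by
      simp only [Ne, Prod.mk.injEq, not_and]
      intro hc; exact absurd hc.symm hki
    exact (hns (i, j) (k, j) h hinv hne').2.2.2 rfl
  have hpik : p i < p k := by
    have hnl : ¬ p k < p i := fun hc => h1 ⟨hik, hc⟩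
    exact lt_of_le_of_ne (not_lt.mp hnl) (fun hc => hki.symm (p.injective hc))
  have hpkj : p k < p j := by
    have hnl : ¬ p j < p k := fun hc => h2 ⟨hkj, hc⟩
    exact lt_of_le_of_ne (not_lt.mp hnl) (fun hc => hkj' (p.injective hc))
  exact absurd h.2 (asymm (hpik.trans hpkj))

lemma swap_order {n : ℕ} {i j : Fin n} (hij : i < j) (hj : (j : ℕ) = (i : ℕ) + 1)
    {a b : Fin n} (hab : a < b) (hne : (a, b) ≠ (i, j)) :
    Equiv.swap i j a < Equiv.swap i j b := by
  have hab' : (a : ℕ) < (b : ℕ) := hab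
  simp only [Equiv.swap_apply_def]
  simp only [Ne, Prod.mk.injEq, not_and] at hne
  split_ifs with h1 h2 h3 h4 h5 <;>
    · simp only [Fin.lt_def, Fin.ext_iff] at *
      omega

example : True := trivial

lemma isInv_mul_swap_iff {n : ℕ} {p : Equiv.Perm (Fin n)} {i j : Fin n}
    (hij : i < j) (hj : (j : ℕ) = (i : ℕ) + 1) (hinv : IsInv p (i, j))
    (y : Fin n × Fin n) :
    IsInv (p * Equiv.swap i j) y ↔
      (Equiv.swap i j y.1, Equiv.swap i j y.2) ∈
        ((Finset.univ.filter fun x : Fin n × Fin n => IsInv p x).erase (i, j)) := by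
  have hmul : ∀ a, (p * Equiv.swap i j) a = p (Equiv.swap i j a) := fun a => rfl
  constructor
  · rintro ⟨h1, h2⟩
    rw [hmul, hmul] at h2
    have hy : y ≠ (i, j) := by
      rintro rfl
      simp only [Equiv.swap_apply_left, Equiv.swap_apply_right] at h2
      exact absurd hinv.2 (asymm h2)
    have hord : Equiv.swap i j y.1 < Equiv.swap i j y.2 :=
      swap_order hij hj h1 (by simpa using hy)
    rw [Finset.mem_erase]
    refine ⟨?_, by simp only [Finset.mem_filter, Finset.mem_univ, true_and]; exact ⟨hord, h2⟩⟩
    intro hc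
    have h1' : Equiv.swap i j y.1 = i := congrArg Prod.fst hc
    have h2' : Equiv.swap i j y.2 = j := congrArg Prod.snd hc
    have e1 : y.1 = j := by
      have := congrArg (Equiv.swap i j) h1'
      simpa [Equiv.swap_apply_self, Equiv.swap_apply_left] using this
    have e2 : y.2 = i := by
      have := congrArg (Equiv.swap i j) h2'
      simpa [Equiv.swap_apply_self, Equiv.swap_apply_right] using this
    have hlt : y.1 < y.2 := h1
    rw [e1, e2] at hlt
    exact absurd hlt (asymm hij)
  · intro hmem
    rw [Finset.mem_erase, Finset.mem_filter] at hmem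
    obtain ⟨hne, _, hord, hval⟩ := hmem
    refine ⟨?_, by rw [hmul, hmul]; exact hval⟩
    have := swap_order hij hj hord hne
    simpa [Equiv.swap_apply_self] using this

lemma step_lemma {n : ℕ} {p : Equiv.Perm (Fin n)} (hns : NoSharedInv p)
    {i j : Fin n} (hinv : IsInv p (i, j)) :
    (Finset.univ.filter fun x : Fin n × Fin n => IsInv (p * Equiv.swap i j) x).card
      = (Finset.univ.filter fun x : Fin n × Fin n => IsInv p x).card - 1
    ∧ NoSharedInv (p * Equiv.swap i j) := by
  have hij : i < j := hinv.1
  have hj : (j : ℕ) = (i : ℕ) + 1 := adj_of_noShared hns hinv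
  set S := Finset.univ.filter fun x : Fin n × Fin n => IsInv p x with hS
  have e : (Fin n × Fin n) ≃ (Fin n × Fin n) :=
    (Equiv.swap i j).prodCongr (Equiv.swap i j)
  constructor
  · have hset : (Finset.univ.filter fun x : Fin n × Fin n => IsInv (p * Equiv.swap i j) x)
        = (S.erase (i, j)).map ((Equiv.swap i j).prodCongr (Equiv.swap i j)).toEmbedding := by
      ext z
      rw [Finset.mem_filter, Finset.mem_map_equiv]
      simp only [Finset.mem_univ, true_and, Equiv.prodCongr_symm, Equiv.symm_swap,
        Equiv.prodCongr_apply, Prod.map]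
      exact isInv_mul_swap_iff hij hj hinv z
    rw [hset, Finset.card_map, Finset.card_erase_of_mem]
    rw [hS, Finset.mem_filter]
    exact ⟨Finset.mem_univ _, hinv⟩
  · intro x y hx hy hxy
    have hx' := (isInv_mul_swap_iff hij hj hinv x).mp hx
    have hy' := (isInv_mul_swap_iff hij hj hinv y).mp hy
    rw [Finset.mem_erase, Finset.mem_filter] at hx' hy'
    have hne : (Equiv.swap i j x.1, Equiv.swap i j x.2)
        ≠ (Equiv.swap i j y.1, Equiv.swap i j y.2) := by
      intro hc
      apply hxy
      have a1 : x.1 = y.1 := (Equiv.swap i j).injective (congrArg Prod.fst hc)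
      have a2 : x.2 = y.2 := (Equiv.swap i j).injective (congrArg Prod.snd hc)
      exact Prod.ext a1 a2
    have := hns _ _ hx'.2.2 hy'.2.2 hne
    exact ⟨fun hc => this.1 (congrArg (Equiv.swap i j) hc),
      fun hc => this.2.1 (congrArg (Equiv.swap i j) hc),
      fun hc => this.2.2.1 (congrArg (Equiv.swap i j) hc),
      fun hc => this.2.2.2 (congrArg (Equiv.swap i j) hc)⟩

/-- The number of permutations of length `n` with exactly `r` inversions, no two sharing an
entry, is at most `n` times the number with exactly `r - 1` such inversions. -/
theorem card_SStar_le (n r : ℕ) (hn : 1 ≤ n) (hr : 1 ≤ r) :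
    Fintype.card (SStar n r) ≤ n * Fintype.card (SStar n (r - 1)) := by
  classical
  have hstep : ∀ P : SStar n r, ∃ (q : Equiv.Perm (Fin n)) (i j : Fin n),
      (j : ℕ) = (i : ℕ) + 1 ∧ P.1 = q * Equiv.swap i j ∧
      (Finset.univ.filter fun x : Fin n × Fin n => IsInv q x).card = r - 1 ∧
      NoSharedInv q := by
    rintro ⟨p, hcard, hns⟩
    have hpos : 0 < (Finset.univ.filter fun x : Fin n × Fin n => IsInv p x).card := by
      rw [hcard]; omega
    obtain ⟨x, hx⟩ := Finset.card_pos.mp hpos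
    rw [Finset.mem_filter] at hx
    have hinv : IsInv p (x.1, x.2) := hx.2
    obtain ⟨hc, hns'⟩ := step_lemma hns hinv
    refine ⟨p * Equiv.swap x.1 x.2, x.1, x.2, adj_of_noShared hns hinv, ?_, ?_, hns'⟩
    · rw [mul_assoc, Equiv.swap_mul_self, mul_one]
    · rw [hc, hcard]
  choose q ci cj hcj hp hqcard hqns using hstep
  let f : SStar n r → SStar n (r - 1) × Fin n :=
    fun P => (⟨q P, hqcard P, hqns P⟩, ci P)
  have hf : Function.Injective f := by
    intro P1 P2 h
    have h1 : q P1 = q P2 := congrArg Subtype.val (congrArg Prod.fst h)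
    have h2 : ci P1 = ci P2 := congrArg Prod.snd h
    have h3 : cj P1 = cj P2 := by
      apply Fin.ext
      rw [hcj, hcj, h2]
    apply Subtype.ext
    rw [hp P1, hp P2, h1, h2, h3]
  calc Fintype.card (SStar n r) ≤ Fintype.card (SStar n (r - 1) × Fin n) :=
        Fintype.card_le_of_injective f hf
    _ = n * Fintype.card (SStar n (r - 1)) := by
        rw [Fintype.card_prod, Fintype.card_fin, mul_comm]
end

section
/- Fix a pattern q of length k and r ≥ 2. There is an injection from the set of permutations of length n with exactly r occurrences of q, at least two of which share an entry, into {1,...,n} × {1,...,n} × (union over 0 ≤ i ≤ r−2 of the sets of permutations of length n−1 with exactly i occurrences of q). -/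
/-- `p` contains two distinct occurrences of `q` sharing an entry (a common position). -/
def HasSharedOcc {k n : ℕ} (q : Equiv.Perm (Fin k)) (p : Equiv.Perm (Fin n)) : Prop :=
  ∃ f g : Fin k → Fin n, IsOcc q p f ∧ IsOcc q p g ∧ f ≠ g ∧ ∃ a b : Fin k, f a = g b

/-!
Let `x` be a position shared by two distinct occurrences of `q` in `p`. Deleting the entry at `x`
and standardising gives a permutation of length `n - 1` whose occurrences of `q` correspond to
occurrences in `p` avoiding `x`; at least two occurrences of `p` are lost, so at most `r - 2`
remain. Since `p` is recovered from `x`, the value `p x` and the shortened permutation, the map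
`p ↦ (x, p x, p with entry x deleted)` is injective.
-/

open Finset Function

namespace Equiv.Perm

variable {m k : ℕ}

/-- Conjugating by `finSuccEquiv'` sends positions `≠ i` and values `≠ p i` to `some _` and the
pair `i ↦ p i` to `none ↦ none`; `removeNone` then strips it. -/
noncomputable def deleteEntry (p : Perm (Fin (m + 1))) (i : Fin (m + 1)) : Perm (Fin m) :=
  removeNone ((finSuccEquiv' i).symm.trans (p.trans (finSuccEquiv' (p i))))

@[simp]
theorem succAbove_deleteEntry (p : Perm (Fin (m + 1))) (i : Fin (m + 1)) (j : Fin m) :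
    (p i).succAbove (p.deleteEntry i j) = p (i.succAbove j) := by
  obtain ⟨y, hy⟩ := Fin.exists_succAbove_eq fun h => Fin.succAbove_ne i j (p.injective h)
  have hsome : some (p.deleteEntry i j) = some y := by
    rw [deleteEntry, removeNone_some _ ⟨y, ?_⟩] <;>
      simp [finSuccEquiv'_symm_some, ← hy, finSuccEquiv'_succAbove]
  rw [Option.some_injective _ hsome, hy]

theorem apply_deleteEntry_injective (i : Fin (m + 1)) :
    Injective fun p : Perm (Fin (m + 1)) => (p i, p.deleteEntry i) := by
  intro p p' h
  obtain ⟨hv, hd⟩ := Prod.mk.inj h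
  ext x
  rcases eq_or_ne x i with rfl | hx
  · rw [hv]
  · obtain ⟨j, rfl⟩ := Fin.exists_succAbove_eq hx
    rw [← succAbove_deleteEntry, ← succAbove_deleteEntry, hv, hd]

end Equiv.Perm

open Equiv Perm

variable {m k : ℕ} {q : Perm (Fin k)}

theorem IsOcc.succAbove_comp {p : Perm (Fin (m + 1))} {i : Fin (m + 1)} {f : Fin k → Fin m}
    (hf : IsOcc q (p.deleteEntry i) f) : IsOcc q p (i.succAbove ∘ f) := by
  refine ⟨fun a b hab => Fin.succAbove_lt_succAbove_iff.mpr (hf.1 a b hab), fun a b => ?_⟩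
  rw [hf.2 a b, comp_apply, comp_apply, ← succAbove_deleteEntry, ← succAbove_deleteEntry,
    Fin.succAbove_lt_succAbove_iff]

theorem numOcc_eq_card_filter {n : ℕ} (p : Perm (Fin n)) :
    numOcc q p = #(univ.filter (IsOcc q p)) :=
  Fintype.card_subtype _

/-- Every occurrence of `q` in `p.deleteEntry x` lifts to an occurrence in `p` avoiding `x`. -/
theorem numOcc_deleteEntry_add_card_le {p : Perm (Fin (m + 1))} {x : Fin (m + 1)}
    (s : Finset (Fin k → Fin (m + 1))) (hs : ∀ f ∈ s, IsOcc q p f ∧ x ∈ Set.range f) :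
    numOcc q (p.deleteEntry x) + #s ≤ numOcc q p := by
  classical
  set lifts := (univ.filter (IsOcc q (p.deleteEntry x))).image (x.succAbove ∘ ·)
  have hlifts : #lifts = numOcc q (p.deleteEntry x) := by
    rw [card_image_of_injective _ (Fin.succAbove_right_injective.comp_left),
      numOcc_eq_card_filter]
  have hdisj : Disjoint lifts s := by
    rw [disjoint_left]
    rintro _ hf hfs
    obtain ⟨f, -, rfl⟩ := mem_image.mp hf
    obtain ⟨a, ha⟩ := (hs _ hfs).2
    exact Fin.succAbove_ne x (f a) ha
  have hsub : lifts ∪ s ⊆ univ.filter (IsOcc q p) := by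
    refine union_subset (fun _ hlift => ?_) (fun f hf => mem_filter.mpr ⟨mem_univ f, (hs f hf).1⟩)
    obtain ⟨f, hf, rfl⟩ := mem_image.mp hlift
    exact mem_filter.mpr ⟨mem_univ _, (mem_filter.mp hf).2.succAbove_comp⟩
  rw [← hlifts, ← card_union_of_disjoint hdisj, numOcc_eq_card_filter]
  exact card_le_card hsub

theorem numOcc_deleteEntry_add_two_le {p : Perm (Fin (m + 1))} {x : Fin (m + 1)}
    {f g : Fin k → Fin (m + 1)} (hf : IsOcc q p f) (hg : IsOcc q p g) (hfg : f ≠ g)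
    (hxf : x ∈ Set.range f) (hxg : x ∈ Set.range g) :
    numOcc q (p.deleteEntry x) + 2 ≤ numOcc q p := by
  have := numOcc_deleteEntry_add_card_le (p := p) {f, g} (by
    simp only [mem_insert, mem_singleton, forall_eq_or_imp, forall_eq]
    exact ⟨⟨hf, hxf⟩, hg, hxg⟩)
  rwa [card_pair hfg] at this

theorem HasSharedOcc.exists_shared_position {n : ℕ} {p : Perm (Fin n)} (h : HasSharedOcc q p) :
    ∃ x : Fin n, ∃ f g, IsOcc q p f ∧ IsOcc q p g ∧ f ≠ g ∧
      x ∈ Set.range f ∧ x ∈ Set.range g := by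
  obtain ⟨f, g, hf, hg, hfg, a, b, hab⟩ := h
  exact ⟨f a, f, g, hf, hg, hfg, ⟨a, rfl⟩, ⟨b, hab.symm⟩⟩

theorem exists_injection_shared_general {k : ℕ} (q : Equiv.Perm (Fin k)) (n r : ℕ) :
    ∃ φ : {p : Equiv.Perm (Fin n) // numOcc q p = r ∧ HasSharedOcc q p} →
        Fin n × Fin n × {p : Equiv.Perm (Fin (n - 1)) // numOcc q p ≤ r - 2},
      Function.Injective φ := by
  choose x f g hf hg hfg hxf hxg using
    fun p : {p : Perm (Fin n) // numOcc q p = r ∧ HasSharedOcc q p} =>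
      p.2.2.exists_shared_position
  obtain _ | m := n
  · exact ⟨fun p => (x p).elim0, fun p => (x p).elim0⟩
  refine ⟨fun p => (x p, p.1 (x p), ⟨p.1.deleteEntry (x p), ?_⟩), ?_⟩
  · have := numOcc_deleteEntry_add_two_le (hf p) (hg p) (hfg p) (hxf p) (hxg p)
    omega
  rintro ⟨p, hp⟩ ⟨p', hp'⟩ h
  simp only [Prod.mk.injEq, Subtype.mk.injEq] at h
  obtain ⟨hx, hv, hd⟩ := h
  rw [← hx] at hv hd
  exact Subtype.ext (apply_deleteEntry_injective _ (Prod.ext hv hd))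

/-- There is an injection from the set of permutations of length `n` with exactly `r`
occurrences of `q`, at least two of which share an entry, into
`[n] × [n] × (⋃_{0 ≤ i ≤ r-2} S_{n-1,i}(q))`. -/
theorem exists_injection_shared {k : ℕ} (q : Equiv.Perm (Fin k)) (n r : ℕ) (hr : 2 ≤ r) :
    ∃ φ : {p : Equiv.Perm (Fin n) // numOcc q p = r ∧ HasSharedOcc q p} →
        Fin n × Fin n × {p : Equiv.Perm (Fin (n - 1)) // numOcc q p ≤ r - 2},
      Function.Injective φ :=
  exists_injection_shared_general q n r
end

section
/- Fix a pattern q of length k and r ≥ 2. The number of permutations of length n with exactly r occurrences of q in which some two occurrences share an entry is at most n^2 times the sum over 0 ≤ i ≤ r−2 of the number of permutations of length n−1 with exactly i occurrences of q. -/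
noncomputable instance {k n r : ℕ} (q : Equiv.Perm (Fin k)) :
    Fintype {p : Equiv.Perm (Fin n) // numOcc q p = r ∧ HasSharedOcc q p} :=
  Fintype.ofFinite _

noncomputable def delPerm {m : ℕ} (p : Equiv.Perm (Fin (m+1))) (a : Fin (m+1)) :
    Equiv.Perm (Fin m) :=
  (finSuccAboveEquiv a).trans
    ((Equiv.subtypeEquiv p (fun x => not_congr (Equiv.apply_eq_iff_eq p).symm)).trans
      (finSuccAboveEquiv (p a)).symm)

lemma succAbove_finSuccAboveEquiv_symm {m : ℕ} (v : Fin (m+1)) (x : {y : Fin (m+1) // y ≠ v}) :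
    v.succAbove ((finSuccAboveEquiv v).symm x) = x.1 := by
  conv_rhs => rw [← Equiv.apply_symm_apply (finSuccAboveEquiv v) x]
  rw [finSuccAboveEquiv_apply]

lemma delPerm_apply {m : ℕ} (p : Equiv.Perm (Fin (m+1))) (a : Fin (m+1)) (i : Fin m) :
    (p a).succAbove (delPerm p a i) = p (a.succAbove i) := by
  have h : delPerm p a i = (finSuccAboveEquiv (p a)).symm
      ⟨p (a.succAbove i), by simp [Equiv.apply_eq_iff_eq, Fin.succAbove_ne]⟩ := by
    simp [delPerm, finSuccAboveEquiv_apply, Equiv.subtypeEquiv]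
  rw [h, succAbove_finSuccAboveEquiv_symm]

lemma isOcc_of_del {m k : ℕ} (q : Equiv.Perm (Fin k)) (p : Equiv.Perm (Fin (m+1)))
    (a : Fin (m+1)) (f : Fin k → Fin m) (h : IsOcc q (delPerm p a) f) :
    IsOcc q p (fun i => a.succAbove (f i)) := by
  refine ⟨fun i j hij => Fin.strictMono_succAbove a (h.1 i j hij), fun i j => ?_⟩
  rw [h.2 i j, ← delPerm_apply, ← delPerm_apply, Fin.succAbove_lt_succAbove_iff]

lemma numOcc_del_add_two_le {m k : ℕ} (q : Equiv.Perm (Fin k)) (p : Equiv.Perm (Fin (m+1)))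
    (f g : Fin k → Fin (m+1)) (hf : IsOcc q p f) (hg : IsOcc q p g) (hne : f ≠ g)
    (a0 b0 : Fin k) (hab : f a0 = g b0) :
    numOcc q (delPerm p (f a0)) + 2 ≤ numOcc q p := by
  classical
  set a := f a0 with ha
  have h1 : numOcc q (delPerm p a) ≤
      Fintype.card {h : Fin k → Fin (m+1) // IsOcc q p h ∧ ¬ ∃ i, h i = a} := by
    refine Fintype.card_le_of_injective
      (fun s => ⟨fun i => a.succAbove (s.1 i), isOcc_of_del q p a s.1 s.2,
        by rintro ⟨i, hi⟩; exact Fin.succAbove_ne a (s.1 i) hi⟩) ?_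
    rintro ⟨s, hs⟩ ⟨t, ht⟩ hst
    apply Subtype.ext; funext i
    exact Fin.succAbove_right_injective (congrFun (congrArg Subtype.val hst) i)
  have h2 : 2 ≤ Fintype.card {h : Fin k → Fin (m+1) // IsOcc q p h ∧ ∃ i, h i = a} := by
    rw [show (2:ℕ) = 1 + 1 from rfl, ← Nat.lt_iff_add_one_le, Fintype.one_lt_card_iff]
    exact ⟨⟨f, hf, a0, rfl⟩, ⟨g, hg, b0, hab.symm⟩,
      fun h => hne (congrArg Subtype.val h)⟩
  have h3 : Fintype.card {h : Fin k → Fin (m+1) // IsOcc q p h ∧ ∃ i, h i = a} +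
      Fintype.card {h : Fin k → Fin (m+1) // IsOcc q p h ∧ ¬ ∃ i, h i = a} = numOcc q p := by
    rw [numOcc, Fintype.card_subtype, Fintype.card_subtype, Fintype.card_subtype]
    have e1 : Finset.filter (fun h : Fin k → Fin (m+1) => IsOcc q p h ∧ ∃ i, h i = a)
        Finset.univ = Finset.filter (fun h => ∃ i, h i = a)
        (Finset.filter (IsOcc q p) Finset.univ) := (Finset.filter_filter _ _ _).symm
    have e2 : Finset.filter (fun h : Fin k → Fin (m+1) => IsOcc q p h ∧ ¬ ∃ i, h i = a)
        Finset.univ = Finset.filter (fun h => ¬ ∃ i, h i = a)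
        (Finset.filter (IsOcc q p) Finset.univ) := (Finset.filter_filter _ _ _).symm
    rw [e1, e2]
    exact Finset.card_filter_add_card_filter_not _
  calc numOcc q (delPerm p a) + 2 ≤
      Fintype.card {h : Fin k → Fin (m+1) // IsOcc q p h ∧ ¬ ∃ i, h i = a} +
      Fintype.card {h : Fin k → Fin (m+1) // IsOcc q p h ∧ ∃ i, h i = a} :=
        Nat.add_le_add h1 h2
    _ = numOcc q p := by rw [Nat.add_comm]; exact h3

lemma delPerm_reconstruct {m : ℕ} (p₁ p₂ : Equiv.Perm (Fin (m+1))) (a : Fin (m+1))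
    (hv : p₁ a = p₂ a) (hd : delPerm p₁ a = delPerm p₂ a) : p₁ = p₂ := by
  ext x
  rcases eq_or_ne x a with rfl | hx
  · exact congrArg Fin.val hv
  · obtain ⟨i, rfl⟩ := Fin.exists_succAbove_eq hx
    have := delPerm_apply p₁ a i
    rw [hd, hv, delPerm_apply p₂ a i] at this
    exact congrArg Fin.val this.symm

/-- The number of permutations of length `n` with exactly `r` occurrences of `q` in which some
two occurrences share an entry is at most `n^2` times the sum over `0 ≤ i ≤ r-2` of the number
of permutations of length `n-1` with exactly `i` occurrences of `q`. -/
theorem card_shared_le {k : ℕ} (q : Equiv.Perm (Fin k)) (n r : ℕ) (hr : 2 ≤ r) :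
    Fintype.card {p : Equiv.Perm (Fin n) // numOcc q p = r ∧ HasSharedOcc q p} ≤
      n ^ 2 * ∑ i ∈ Finset.range (r - 1), occCard (n - 1) i q := by
  classical
  cases n with
  | zero =>
    have he : IsEmpty {p : Equiv.Perm (Fin 0) // numOcc q p = r ∧ HasSharedOcc q p} := by
      constructor
      rintro ⟨p, -, f, g, -, -, -, a, b, hab⟩
      exact (f a).elim0
    rw [Fintype.card_eq_zero]
    exact Nat.zero_le _
  | succ m =>
    have hT : Fintype.card {p' : Equiv.Perm (Fin m) // numOcc q p' < r - 1} =
        ∑ i ∈ Finset.range (r - 1), occCard m i q := by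
      rw [Fintype.card_subtype]
      rw [Finset.card_eq_sum_card_fiberwise (f := fun p' => numOcc q p')
        (t := Finset.range (r-1))
        (fun x hx => Finset.mem_range.mpr (Finset.mem_filter.mp hx).2)]
      refine Finset.sum_congr rfl fun i hi => ?_
      rw [occCard, Fintype.card_subtype]
      congr 1
      ext p'
      simp only [Finset.mem_filter, Finset.mem_univ, true_and]
      have hi' := Finset.mem_range.mp hi
      exact ⟨fun h => h.2, fun h => ⟨by omega, h⟩⟩
    have key : ∀ p : {p : Equiv.Perm (Fin (m+1)) // numOcc q p = r ∧ HasSharedOcc q p},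
        ∃ a : Fin (m+1), numOcc q (delPerm p.1 a) < r - 1 := by
      rintro ⟨p, hp, f, g, hf, hg, hne, a0, b0, hab⟩
      refine ⟨f a0, ?_⟩
      show numOcc q (delPerm p (f a0)) < r - 1
      have := numOcc_del_add_two_le q p f g hf hg hne a0 b0 hab
      omega
    set Φ : {p : Equiv.Perm (Fin (m+1)) // numOcc q p = r ∧ HasSharedOcc q p} →
        Fin (m+1) × Fin (m+1) × {p' : Equiv.Perm (Fin m) // numOcc q p' < r - 1} :=
      fun p => ⟨(key p).choose, p.1 (key p).choose,
        ⟨delPerm p.1 (key p).choose, (key p).choose_spec⟩⟩ with hΦdef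
    have hΦ : Function.Injective Φ := by
      rintro p₁ p₂ h
      have h1 : (key p₁).choose = (key p₂).choose := congrArg Prod.fst h
      have h2 : p₁.1 (key p₁).choose = p₂.1 (key p₂).choose :=
        congrArg (fun x => x.2.1) h
      have h3 : delPerm p₁.1 (key p₁).choose = delPerm p₂.1 (key p₂).choose :=
        congrArg (fun x => x.2.2.1) h
      rw [← h1] at h2 h3
      exact Subtype.ext (delPerm_reconstruct p₁.1 p₂.1 _ h2 h3)
    calc Fintype.card {p : Equiv.Perm (Fin (m+1)) // numOcc q p = r ∧ HasSharedOcc q p}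
        ≤ Fintype.card (Fin (m+1) × Fin (m+1) ×
            {p' : Equiv.Perm (Fin m) // numOcc q p' < r - 1}) :=
          Fintype.card_le_of_injective Φ hΦ
      _ = (m+1) ^ 2 * ∑ i ∈ Finset.range (r - 1), occCard m i q := by
          rw [Fintype.card_prod, Fintype.card_prod, Fintype.card_fin, hT]; ring
      _ = (m+1) ^ 2 * ∑ i ∈ Finset.range (r - 1), occCard (m+1-1) i q := rfl
end

section
/- Fix r ≥ 1 with r < 4. The ordinary generating function S(z) = Σ_{n≥0} |S_{n,r}(3412)| z^n is not algebraic, given that there exist constants c, C > 0 with c·9^n/n^{4−r} ≤ |S_{n,r}(3412)| ≤ C·9^n/n^{4−r} for all large n. -/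
open Filter

/-!
Put `b n = |S_{n,r}(3412)| / 9 ^ n`, so that `c / n ^ k ≤ b n ≤ C / n ^ k` for `k = 4 - r`;
substituting `X ↦ X / 9` preserves algebraicity over `ℝ[X]`. The tail sums
`T n = ∑_{m > n} b m` satisfy `(1 - X) T = (∑ b) - B` as power series, so `T` is algebraic
when `B` is, while its coefficients are of order `n ^ (1 - k)`: this reduces everything to
`k = 1`.

For `k = 1` the sum `B(s) = ∑ b n s ^ n` is comparable to `-log (1 - s)`, so `B(s) → ∞` as
`s → 1⁻` although `(1 - s) B(s) ^ m → 0` for every `m`. No relation `P(s, B(s)) = 0` with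
`P ≠ 0` survives this: after removing from `P` the largest power of `X - 1` dividing all its
coefficients, divide the relation by `B(s) ^ I`, where `I` is the largest index whose
coefficient does not vanish at `1`; every term except the `I`-th tends to `0`, while that one
tends to a nonzero limit.
-/

open Polynomial Topology
open scoped PowerSeries

namespace PowerSeries

variable {R : Type*} [NormedCommRing R]

lemma coeff_mul_mul_pow (f g : R⟦X⟧) (t : R) (n : ℕ) :
    coeff n (f * g) * t ^ n = ∑ kl ∈ Finset.HasAntidiagonal.antidiagonal n,
      (coeff kl.1 f * t ^ kl.1) * (coeff kl.2 g * t ^ kl.2) := by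
  rw [coeff_mul, Finset.sum_mul]
  refine Finset.sum_congr rfl fun kl hkl => ?_
  rw [← Finset.HasAntidiagonal.mem_antidiagonal.mp hkl, pow_add]
  ring

lemma coeff_coe_mul_pow_eq_zero {p : R[X]} {n : ℕ} (hn : n ∉ Finset.range (p.natDegree + 1))
    (t : R) : coeff n (p : R⟦X⟧) * t ^ n = 0 := by
  rw [Finset.mem_range, not_lt] at hn
  simp [coeff_eq_zero_of_natDegree_lt (Nat.lt_of_succ_le hn)]

lemma summable_norm_coeff_coe_mul_pow (p : R[X]) (t : R) :
    Summable fun n => ‖coeff n (p : R⟦X⟧) * t ^ n‖ :=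
  summable_of_ne_finset_zero fun _ hn => by rw [coeff_coe_mul_pow_eq_zero hn, norm_zero]

def absConvSubring (t : R) : Subring R⟦X⟧ where
  carrier := {f | Summable fun n => ‖coeff n f * t ^ n‖}
  mul_mem' {f g} hf hg := by
    simpa only [Set.mem_ofPred_eq, coeff_mul_mul_pow] using
      summable_norm_sum_mul_antidiagonal_of_summable_norm hf hg
  one_mem' := by simpa using summable_norm_coeff_coe_mul_pow (1 : R[X]) t
  add_mem' {f g} hf hg := by
    refine (hf.add hg).of_nonneg_of_le (fun _ => norm_nonneg _) fun n => ?_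
    rw [map_add, add_mul]
    exact norm_add_le _ _
  zero_mem' := by simp
  neg_mem' {f} hf := by simpa using hf

variable [CompleteSpace R]

noncomputable def evalAbsConv (t : R) : absConvSubring t →+* R where
  toFun f := ∑' n, coeff n (f : R⟦X⟧) * t ^ n
  map_one' := by
    rw [tsum_eq_single 0 fun n hn => by simp [coeff_one, hn]]
    simp
  map_mul' f g := by
    simp only [Subring.coe_mul, coeff_mul_mul_pow]
    exact (tsum_mul_tsum_eq_tsum_sum_antidiagonal_of_summable_norm f.2 g.2).symm
  map_zero' := by simp
  map_add' f g := by
    simp only [Subring.coe_add, map_add, add_mul]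
    exact (f.2.of_norm).tsum_add g.2.of_norm

lemma evalAbsConv_coe (p : R[X]) (t : R) :
    evalAbsConv t ⟨p, summable_norm_coeff_coe_mul_pow p t⟩ = p.eval t := by
  rw [evalAbsConv, RingHom.coe_mk, MonoidHom.coe_mk, OneHom.coe_mk, eval_eq_sum_range,
    tsum_eq_sum fun n hn => coeff_coe_mul_pow_eq_zero hn t]
  simp

theorem evalEval_tsum_eq_zero_of_aeval_eq_zero {f : R⟦X⟧} {t : R}
    (hf : Summable fun n => ‖coeff n f * t ^ n‖) {P : R[X][X]} (hP : Polynomial.aeval f P = 0) :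
    P.evalEval t (∑' n, coeff n f * t ^ n) = 0 := by
  set S := absConvSubring t
  set ι : R[X] →+* S :=
    coeToPowerSeries.ringHom.codRestrict S (summable_norm_coeff_coe_mul_pow · t)
  have hι : (evalAbsConv t).comp ι = evalRingHom t :=
    RingHom.ext fun p => evalAbsConv_coe p t
  have hzero : Polynomial.eval₂ ι ⟨f, hf⟩ P = 0 := by
    apply Subtype.val_injective
    rw [← S.coe_subtype, hom_eval₂]
    exact hP
  rw [← eval₂_evalRingHom, ← hι]
  change Polynomial.eval₂ _ (evalAbsConv t ⟨f, hf⟩) P = 0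
  rw [← hom_eval₂, hzero, map_zero]

end PowerSeries

lemma PowerSeries.rescale_comp_coeToPowerSeries {R : Type*} [CommRing R] (γ : R) :
    (rescale γ).comp (coeToPowerSeries.ringHom : R[X] →+* R⟦X⟧) =
      coeToPowerSeries.ringHom.comp (compRingHom (Polynomial.C γ * Polynomial.X)) := by
  refine ringHom_ext (fun a => ?_) ?_
  · ext (_ | n) <;> simp [coeff_rescale, coeff_C]
  · simp [rescale_X]

lemma Polynomial.compRingHom_C_mul_X_injective {R : Type*} [CommRing R] [IsDomain R] {γ : R}
    (hγ : γ ≠ 0) : Function.Injective (compRingHom (C γ * X)) := by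
  refine (injective_iff_map_eq_zero _).2 fun p hp => ?_
  refine ((comp_eq_zero_iff.1 hp).resolve_right fun ⟨_, h⟩ => hγ ?_)
  simpa using congrArg (coeff · 1) h

lemma IsAlgebraic.rescale {R : Type*} [CommRing R] [IsDomain R] {γ : R} (hγ : γ ≠ 0)
    {f : R⟦X⟧} (hf : IsAlgebraic R[X] f) : IsAlgebraic R[X] (PowerSeries.rescale γ f) :=
  hf.ringHom_of_comp_eq (compRingHom (C γ * X)) (PowerSeries.rescale γ)
    (compRingHom_C_mul_X_injective hγ) (PowerSeries.rescale_comp_coeToPowerSeries γ).symm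

lemma Polynomial.evalEval_eq_sum {R : Type*} [CommSemiring R] (t y : R) (Q : R[X][X]) :
    Q.evalEval t y = ∑ i ∈ Finset.range (Q.natDegree + 1), (Q.coeff i).eval t * y ^ i := by
  simp [evalEval, eval_eq_sum_range (p := Q), eval_finsetSum]

lemma Polynomial.tendsto_eval_nhdsLT (p : ℝ[X]) (x₀ : ℝ) :
    Tendsto (fun t => p.eval t) (𝓝[<] x₀) (𝓝 (p.eval x₀)) :=
  (p.continuous.tendsto x₀).mono_left nhdsWithin_le_nhds

section GrowthObstruction

variable {x₀ : ℝ} {g : ℝ → ℝ}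

lemma tendsto_eval_mul_pow_of_isRoot
    (hg_sub : ∀ m : ℕ, Tendsto (fun t => (x₀ - t) * g t ^ m) (𝓝[<] x₀) (𝓝 0))
    {p : ℝ[X]} (hp : p.IsRoot x₀) (m : ℕ) :
    Tendsto (fun t => p.eval t * g t ^ m) (𝓝[<] x₀) (𝓝 0) := by
  rw [← mul_divByMonic_eq_iff_isRoot.2 hp, ← neg_zero,
    ← mul_zero ((p /ₘ (X - C x₀)).eval x₀)]
  refine (((p /ₘ (X - C x₀)).tendsto_eval_nhdsLT x₀).mul (hg_sub m)).neg.congr fun t => ?_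
  simp only [eval_mul, eval_sub, eval_X, eval_C]
  ring

lemma not_eventually_evalEval_eq_zero_of_eval_coeff_ne_zero
    (hg : Tendsto g (𝓝[<] x₀) atTop)
    (hg_sub : ∀ m : ℕ, Tendsto (fun t => (x₀ - t) * g t ^ m) (𝓝[<] x₀) (𝓝 0))
    {Q : ℝ[X][X]} (hQ : ∃ i, (Q.coeff i).eval x₀ ≠ 0) :
    ¬ ∀ᶠ t in 𝓝[<] x₀, Q.evalEval t (g t) = 0 := by
  classical
  intro hrel
  set n := Q.natDegree + 1
  have hcoeff : ∀ i, (Q.coeff i).eval x₀ ≠ 0 → i ∈ Finset.range n := fun i hi => by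
    by_contra h
    rw [Finset.mem_range, not_lt] at h
    exact hi (by rw [coeff_eq_zero_of_natDegree_lt h, eval_zero])
  set S := (Finset.range n).filter fun i => (Q.coeff i).eval x₀ ≠ 0
  obtain ⟨i₀, hi₀⟩ := hQ
  have hS : S.Nonempty := ⟨i₀, Finset.mem_filter.2 ⟨hcoeff i₀ hi₀, hi₀⟩⟩
  set I := S.max' hS
  have hI : (Q.coeff I).eval x₀ ≠ 0 := (Finset.mem_filter.1 (S.max'_mem hS)).2
  have hroot : ∀ i, I < i → (Q.coeff i).IsRoot x₀ := fun i hi => by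
    by_contra h
    exact hi.not_ge (S.le_max' i (Finset.mem_filter.2 ⟨hcoeff i h, h⟩))
  set T : ℕ → ℝ → ℝ := fun i t => (Q.coeff i).eval t * g t ^ ((i : ℤ) - I)
  have hT : ∀ i ∈ Finset.range n,
      Tendsto (T i) (𝓝[<] x₀) (𝓝 (if i = I then (Q.coeff I).eval x₀ else 0)) := by
    intro i _
    rcases lt_trichotomy i I with hlt | rfl | hgt
    · rw [if_neg hlt.ne, ← mul_zero ((Q.coeff i).eval x₀)]
      exact ((Q.coeff i).tendsto_eval_nhdsLT x₀).mul
        ((tendsto_zpow_atTop_zero (by omega)).comp hg)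
    · simpa [T] using (Q.coeff I).tendsto_eval_nhdsLT x₀
    · rw [if_neg hgt.ne']
      simpa only [T, show (i : ℤ) - I = (i - I : ℕ) by omega, zpow_natCast] using
        tendsto_eval_mul_pow_of_isRoot hg_sub (hroot i hgt) (i - I)
  have hsum : ∀ᶠ t in 𝓝[<] x₀, ∑ i ∈ Finset.range n, T i t = 0 := by
    filter_upwards [hrel, hg.eventually_ne_atTop 0] with t ht hgt
    simp only [T, zpow_sub₀ hgt, zpow_natCast, mul_div_assoc', ← Finset.sum_div]
    rw [← evalEval_eq_sum, ht, zero_div]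
  have hlim := tendsto_finsetSum _ hT
  rw [Finset.sum_ite_eq', if_pos (hcoeff I hI)] at hlim
  exact hI (tendsto_nhds_unique hlim (tendsto_const_nhds.congr' (hsum.mono fun t ht => ht.symm)))

theorem not_eventually_evalEval_eq_zero
    (hg : Tendsto g (𝓝[<] x₀) atTop)
    (hg_sub : ∀ m : ℕ, Tendsto (fun t => (x₀ - t) * g t ^ m) (𝓝[<] x₀) (𝓝 0))
    {Q : ℝ[X][X]} (hQ : Q ≠ 0) :
    ¬ ∀ᶠ t in 𝓝[<] x₀, Q.evalEval t (g t) = 0 := by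
  obtain ⟨m, Q₁, hndvd, rfl⟩ := WfDvdMonoid.max_power_factor' hQ
    (mt isUnit_C.1 (not_isUnit_X_sub_C x₀))
  have hQ₁ : ∃ i, (Q₁.coeff i).eval x₀ ≠ 0 := by
    by_contra! h
    exact hndvd ((C_dvd_iff_dvd_coeff _ _).2 fun i => dvd_iff_isRoot.2 (h i))
  intro hrel
  refine not_eventually_evalEval_eq_zero_of_eval_coeff_ne_zero hg hg_sub hQ₁ ?_
  filter_upwards [hrel, self_mem_nhdsWithin] with t ht (htx : t < x₀)
  simpa [evalEval, sub_ne_zero.2 htx.ne] using ht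

end GrowthObstruction

lemma Real.hasSum_pow_div_natCast {s : ℝ} (hs : |s| < 1) :
    HasSum (fun n : ℕ => s ^ n / n) (-Real.log (1 - s)) := by
  -- the `n = 0` term is `1 / 0 = 0`
  rw [← hasSum_nat_add_iff' 1]
  simpa using Real.hasSum_pow_div_log_of_abs_lt_one hs

lemma tendsto_one_sub_inv_nhdsLT_one : Tendsto (fun s : ℝ => (1 - s)⁻¹) (𝓝[<] 1) atTop := by
  refine tendsto_inv_nhdsGT_zero.comp (tendsto_nhdsWithin_of_tendsto_nhds_of_eventually_within _
    ?_ (eventually_nhdsWithin_of_forall fun s (hs : s < 1) => sub_pos.2 hs))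
  have : Tendsto (fun s : ℝ => 1 - s) (𝓝 1) (𝓝 0) := by
    simpa using (continuous_sub_left (1 : ℝ)).tendsto 1
  exact this.mono_left nhdsWithin_le_nhds

lemma tendsto_neg_log_one_sub_nhdsLT_one :
    Tendsto (fun s : ℝ => -Real.log (1 - s)) (𝓝[<] 1) atTop := by
  simpa [Function.comp_def, Real.log_inv] using
    Real.tendsto_log_atTop.comp tendsto_one_sub_inv_nhdsLT_one

lemma eventually_nonneg_nhdsLT_one : ∀ᶠ s : ℝ in 𝓝[<] 1, 0 ≤ s :=
  ((eventually_gt_nhds one_pos).mono fun _ => le_of_lt).filter_mono nhdsWithin_le_nhds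

lemma tsum_mul_pow_le_sum_abs {w : ℕ → ℝ} {N : ℕ} (hw : ∀ n ≥ N, w n ≤ 0) {s : ℝ}
    (hs₀ : 0 ≤ s) (hs₁ : s ≤ 1) (hsum : Summable fun n => w n * s ^ n) :
    ∑' n, w n * s ^ n ≤ ∑ n ∈ Finset.range N, |w n| := by
  rw [← hsum.sum_add_tsum_nat_add N]
  refine add_le_of_le_of_nonpos (Finset.sum_le_sum fun n _ => ?_)
    (tsum_nonpos fun n => mul_nonpos_of_nonpos_of_nonneg (hw _ (by omega)) (by positivity))
  calc w n * s ^ n ≤ |w n * s ^ n| := le_abs_self _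
    _ ≤ |w n| := by
      rw [abs_mul, abs_of_nonneg (by positivity : 0 ≤ s ^ n)]
      exact mul_le_of_le_one_right (abs_nonneg _) (pow_le_one₀ hs₀ hs₁)

lemma summable_norm_mul_pow_of_eventually_abs_le {b : ℕ → ℝ} {C : ℝ}
    (hb : ∀ᶠ n in atTop, |b n| ≤ C) {s : ℝ} (hs : |s| < 1) :
    Summable fun n => ‖b n * s ^ n‖ := by
  refine Summable.of_norm_bounded_eventually_nat
    ((summable_geometric_of_lt_one (abs_nonneg s) hs).mul_left C) ?_
  filter_upwards [hb] with n hn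
  rw [norm_norm, norm_mul, Real.norm_eq_abs, Real.norm_eq_abs, abs_pow]
  exact mul_le_mul_of_nonneg_right hn (by positivity)

def InvPowBounds (b : ℕ → ℝ) (k : ℕ) (c C : ℝ) : Prop :=
  ∀ᶠ n : ℕ in atTop, c / (n : ℝ) ^ k ≤ b n ∧ b n ≤ C / (n : ℝ) ^ k

namespace InvPowBounds

variable {b : ℕ → ℝ} {c C : ℝ}

lemma eventually_abs_le (hc : 0 < c) (hb : InvPowBounds b 1 c C) :
    ∀ᶠ n in atTop, |b n| ≤ |C| := by
  filter_upwards [hb, eventually_ge_atTop 1] with n ⟨hlow, hup⟩ hn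
  rw [pow_one] at hlow hup
  rw [abs_of_nonneg ((div_nonneg hc.le n.cast_nonneg).trans hlow)]
  calc b n ≤ C / n := hup
    _ ≤ |C| / n := by gcongr; exact le_abs_self C
    _ ≤ |C| := div_le_self (abs_nonneg C) (by exact_mod_cast hn)

lemma exists_bounds_tsum_mul_pow (hc : 0 < c) (hb : InvPowBounds b 1 c C) :
    ∃ K, ∀ s, 0 ≤ s → s < 1 →
      c * -Real.log (1 - s) - K ≤ ∑' n, b n * s ^ n ∧
      ∑' n, b n * s ^ n ≤ C * -Real.log (1 - s) + K := by
  obtain ⟨N, hN⟩ := eventually_atTop.1 hb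
  simp only [pow_one] at hN
  refine ⟨∑ n ∈ Finset.range N, (|c / n - b n| + |b n - C / n|), fun s hs₀ hs₁ => ?_⟩
  have hs : |s| < 1 := by rwa [abs_of_nonneg hs₀]
  have hbs := (summable_norm_mul_pow_of_eventually_abs_le (hb.eventually_abs_le hc) hs).of_norm
  have hsum (a : ℝ) : HasSum (fun n : ℕ => a / n * s ^ n) (a * -Real.log (1 - s)) := by
    simpa only [mul_div_assoc', div_mul_eq_mul_div] using
      (Real.hasSum_pow_div_natCast hs).mul_left a
  have hlow := tsum_mul_pow_le_sum_abs (w := fun n => c / n - b n)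
    (fun n hn => sub_nonpos.2 (hN n hn).1) hs₀ hs₁.le
    (by simpa only [sub_mul] using (hsum c).summable.sub hbs)
  have hup := tsum_mul_pow_le_sum_abs (w := fun n => b n - C / n)
    (fun n hn => sub_nonpos.2 (hN n hn).2) hs₀ hs₁.le
    (by simpa only [sub_mul] using hbs.sub (hsum C).summable)
  rw [Finset.sum_add_distrib]
  simp only [sub_mul] at hlow hup
  rw [(hsum c).summable.tsum_sub hbs, (hsum c).tsum_eq] at hlow
  rw [hbs.tsum_sub (hsum C).summable, (hsum C).tsum_eq] at hup
  have h₁ := Finset.sum_nonneg fun n (_ : n ∈ Finset.range N) => abs_nonneg (c / n - b n)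
  have h₂ := Finset.sum_nonneg fun n (_ : n ∈ Finset.range N) => abs_nonneg (b n - C / n)
  constructor <;> linarith

theorem tendsto_tsum_mul_pow_nhdsLT_one (hc : 0 < c) (hb : InvPowBounds b 1 c C) :
    Tendsto (fun s => ∑' n, b n * s ^ n) (𝓝[<] 1) atTop := by
  obtain ⟨K, hK⟩ := hb.exists_bounds_tsum_mul_pow hc
  refine tendsto_atTop_mono' _ ?_
    (tendsto_atTop_add_const_right _ (-K)
      (tendsto_neg_log_one_sub_nhdsLT_one.const_mul_atTop hc))
  filter_upwards [eventually_nonneg_nhdsLT_one, self_mem_nhdsWithin] with s hs₀ (hs₁ : s < 1)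
  linarith [(hK s hs₀ hs₁).1]

theorem tendsto_one_sub_mul_tsum_mul_pow_pow (hc : 0 < c) (hb : InvPowBounds b 1 c C) (m : ℕ) :
    Tendsto (fun s => (1 - s) * (∑' n, b n * s ^ n) ^ m) (𝓝[<] 1) (𝓝 0) := by
  obtain ⟨K, hK⟩ := hb.exists_bounds_tsum_mul_pow hc
  have hF := hb.tendsto_tsum_mul_pow_nhdsLT_one hc
  have hL := tendsto_neg_log_one_sub_nhdsLT_one
  -- Near `1` the sum is at most `(|C| + |K|) * L` with `L = log x`, `x = (1 - s)⁻¹`.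
  have hlim : Tendsto
      (fun s : ℝ => (|C| + |K|) ^ m * (Real.log (1 - s)⁻¹ ^ m / (1 * (1 - s)⁻¹ + 0)))
      (𝓝[<] 1) (𝓝 0) := by
    simpa using ((Real.tendsto_pow_log_div_mul_add_atTop 1 0 m one_ne_zero).comp
      tendsto_one_sub_inv_nhdsLT_one).const_mul ((|C| + |K|) ^ m)
  refine squeeze_zero' ?_ ?_ hlim
  · filter_upwards [hF.eventually_ge_atTop 0, self_mem_nhdsWithin] with s hF₀ (hs₁ : s < 1)
    exact mul_nonneg (sub_nonneg.2 hs₁.le) (pow_nonneg hF₀ m)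
  · filter_upwards [hF.eventually_ge_atTop 0, hL.eventually_ge_atTop 1,
      eventually_nonneg_nhdsLT_one, self_mem_nhdsWithin] with s hF₀ hL₁ hs₀ (hs₁ : s < 1)
    have hFL : ∑' n, b n * s ^ n ≤ (|C| + |K|) * -Real.log (1 - s) := by
      nlinarith [(hK s hs₀ hs₁).2, le_abs_self C, le_abs_self K, abs_nonneg K]
    calc (1 - s) * (∑' n, b n * s ^ n) ^ m
        ≤ (1 - s) * ((|C| + |K|) * -Real.log (1 - s)) ^ m := by gcongr
      _ = (|C| + |K|) ^ m * (Real.log (1 - s)⁻¹ ^ m / (1 * (1 - s)⁻¹ + 0)) := by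
          rw [Real.log_inv, one_mul, add_zero, div_inv_eq_mul, mul_pow]
          ring

end InvPowBounds

noncomputable def tailSum (b : ℕ → ℝ) (j : ℕ) : ℝ := ∑' n, b (n + (j + 1))

lemma one_sub_X_mul_mk_tailSum {b : ℕ → ℝ} (hb : Summable b) :
    (1 - PowerSeries.X) * PowerSeries.mk (tailSum b) =
      PowerSeries.C (∑' n, b n) - PowerSeries.mk b := by
  ext (_ | j)
  · simp [tailSum, hb.tsum_eq_zero_add]
  · have hj : tailSum b j = b (j + 1) + tailSum b (j + 1) := by
      rw [tailSum, ((summable_nat_add_iff (j + 1)).2 hb).tsum_eq_zero_add, tailSum]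
      simp only [zero_add]
      congr 2 with n
      ring_nf
    simp [sub_mul, PowerSeries.coeff_succ_X_mul, hj]

lemma IsAlgebraic.mk_tailSum {b : ℕ → ℝ} (hb : Summable b)
    (h : IsAlgebraic ℝ[X] (PowerSeries.mk b)) :
    IsAlgebraic ℝ[X] (PowerSeries.mk (tailSum b)) := by
  have hX : ((1 - X : ℝ[X]) : ℝ⟦X⟧) = 1 - PowerSeries.X := by simp
  refine .of_mul (y := ((1 - X : ℝ[X]) : ℝ⟦X⟧)) (mem_nonZeroDivisors_of_ne_zero ?_)
    (isAlgebraic_algebraMap (1 - X)) ?_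
  · rw [hX, sub_ne_zero]
    exact fun h => by simpa using congrArg (PowerSeries.coeff 0) h
  · rw [hX, one_sub_X_mul_mk_tailSum hb, ← coe_C, ← coeToPowerSeries.ringHom_apply]
    exact (isAlgebraic_algebraMap _).sub h

lemma sum_range_inv_sq_add_le (j M : ℕ) :
    ∑ n ∈ Finset.range M, (((n + (j + 1) : ℕ) : ℝ) ^ 2)⁻¹ ≤ 2 / (j + 1) := by
  have := sum_Ioo_inv_sq_le (α := ℝ) j (j + 1 + M)
  rw [← Finset.Ico_add_one_left_eq_Ioo, Finset.sum_Ico_eq_sum_range,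
    Nat.add_sub_cancel_left] at this
  simpa only [add_comm (j + 1)] using this

lemma sum_range_div_pow_add_le {C : ℝ} (hC : 0 ≤ C) {j : ℕ} (hj : 1 ≤ j) (k M : ℕ) :
    ∑ n ∈ Finset.range M, C / (((n + (j + 1) : ℕ) : ℝ) ^ (k + 2)) ≤
      2 * C / j ^ (k + 1) := by
  have hj₁ : (1 : ℝ) ≤ j := by exact_mod_cast hj
  calc ∑ n ∈ Finset.range M, C / (((n + (j + 1) : ℕ) : ℝ) ^ (k + 2))
      ≤ C / j ^ k * ∑ n ∈ Finset.range M, (((n + (j + 1) : ℕ) : ℝ) ^ 2)⁻¹ := by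
        rw [Finset.mul_sum]
        gcongr with n
        rw [← div_eq_mul_inv, div_div, pow_add]
        gcongr
        linarith
    _ ≤ C / j ^ k * (2 / j) := by
        gcongr
        exact (sum_range_inv_sq_add_le j M).trans (by gcongr; linarith)
    _ = 2 * C / j ^ (k + 1) := by
        rw [pow_succ]
        field_simp

lemma div_pow_le_sum_range_div_pow_add {c : ℝ} (hc : 0 ≤ c) {j : ℕ} (hj : 1 ≤ j) (k : ℕ) :
    c / 2 ^ (k + 2) / j ^ (k + 1) ≤
      ∑ n ∈ Finset.range j, c / (((n + (j + 1) : ℕ) : ℝ) ^ (k + 2)) := by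
  calc c / 2 ^ (k + 2) / j ^ (k + 1) = ∑ _n ∈ Finset.range j, c / (2 * j) ^ (k + 2) := by
        rw [Finset.sum_const, Finset.card_range, nsmul_eq_mul, mul_pow]
        field_simp
        ring
    _ ≤ ∑ n ∈ Finset.range j, c / (((n + (j + 1) : ℕ) : ℝ) ^ (k + 2)) := by
        refine Finset.sum_le_sum fun n hn => ?_
        have : (n : ℝ) + 1 ≤ j := by exact_mod_cast Finset.mem_range.1 hn
        gcongr
        push_cast
        linarith

namespace InvPowBounds

variable {b : ℕ → ℝ} {k : ℕ} {c C : ℝ}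

lemma summable (hc : 0 < c) (hb : InvPowBounds b (k + 2) c C) : Summable b := by
  refine Summable.of_norm_bounded_eventually_nat
    ((Real.summable_one_div_nat_pow.2 (by omega : 1 < k + 2)).mul_left C) ?_
  filter_upwards [hb] with n ⟨hlow, hup⟩
  rw [Real.norm_of_nonneg ((div_nonneg hc.le (by positivity)).trans hlow), mul_one_div]
  exact hup

lemma tailSum (hc : 0 < c) (hb : InvPowBounds b (k + 2) c C) :
    InvPowBounds (tailSum b) (k + 1) (c / 2 ^ (k + 2)) (2 * C) := by
  obtain ⟨N, hN⟩ := eventually_atTop.1 hb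
  filter_upwards [eventually_ge_atTop (max N 1)] with j hj
  have hj₁ : 1 ≤ j := (le_max_right N 1).trans hj
  have hN' : ∀ n, N ≤ n + (j + 1) := fun n => by omega
  have hpos : ∀ n, 0 ≤ b (n + (j + 1)) := fun n =>
    (div_nonneg hc.le (by positivity)).trans (hN _ (hN' n)).1
  have hC : 0 ≤ C := by
    have h := (hpos 0).trans (hN _ (hN' 0)).2
    rwa [le_div_iff₀ (by positivity), zero_mul] at h
  have hpartial (M : ℕ) : ∑ n ∈ Finset.range M, b (n + (j + 1)) ≤ 2 * C / j ^ (k + 1) :=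
    (Finset.sum_le_sum fun n _ => (hN _ (hN' n)).2).trans (sum_range_div_pow_add_le hC hj₁ k M)
  refine ⟨?_, Real.tsum_le_of_sum_range_le hpos hpartial⟩
  calc c / 2 ^ (k + 2) / j ^ (k + 1)
      ≤ ∑ n ∈ Finset.range j, c / (((n + (j + 1) : ℕ) : ℝ) ^ (k + 2)) :=
        div_pow_le_sum_range_div_pow_add hc.le hj₁ k
    _ ≤ ∑ n ∈ Finset.range j, b (n + (j + 1)) :=
        Finset.sum_le_sum fun n _ => (hN _ (hN' n)).1
    _ ≤ ∑' n, b (n + (j + 1)) :=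
        (summable_of_sum_range_le hpos hpartial).sum_le_tsum _ fun n _ => hpos n

theorem not_isAlgebraic_mk (hc : 0 < c) (hb : InvPowBounds b (k + 1) c C) :
    ¬ IsAlgebraic ℝ[X] (PowerSeries.mk b) := by
  induction k generalizing b c C with
  | zero =>
    rintro ⟨P, hP, hPb⟩
    refine not_eventually_evalEval_eq_zero (hb.tendsto_tsum_mul_pow_nhdsLT_one hc)
      (hb.tendsto_one_sub_mul_tsum_mul_pow_pow hc) hP ?_
    filter_upwards [eventually_nonneg_nhdsLT_one, self_mem_nhdsWithin] with s hs₀ (hs₁ : s < 1)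
    have hs : |s| < 1 := by rwa [abs_of_nonneg hs₀]
    simpa using PowerSeries.evalEval_tsum_eq_zero_of_aeval_eq_zero
      (by simpa using summable_norm_mul_pow_of_eventually_abs_le (hb.eventually_abs_le hc) hs) hPb
  | succ k ih =>
    exact fun h => ih (by positivity) (hb.tailSum hc) (h.mk_tailSum (hb.summable hc))

end InvPowBounds

theorem not_isAlgebraic_mk_of_bounds {a : ℕ → ℝ} {γ c C : ℝ} {k : ℕ} (hk : 1 ≤ k)
    (hγ : 0 < γ) (hc : 0 < c)
    (ha : ∀ᶠ n : ℕ in atTop, c * γ ^ n / n ^ k ≤ a n ∧ a n ≤ C * γ ^ n / n ^ k) :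
    ¬ IsAlgebraic ℝ[X] (PowerSeries.mk a) := by
  obtain ⟨k, rfl⟩ := Nat.exists_eq_add_of_le' hk
  have hb : InvPowBounds (fun n => γ⁻¹ ^ n * a n) (k + 1) c C := by
    filter_upwards [ha] with n ⟨hlow, hup⟩
    have hγn : 0 < γ ^ n := by positivity
    rw [inv_pow, ← div_eq_inv_mul, le_div_iff₀ hγn, div_le_iff₀ hγn, div_mul_eq_mul_div,
      div_mul_eq_mul_div]
    exact ⟨hlow, hup⟩
  intro h
  refine hb.not_isAlgebraic_mk hc ?_
  simpa [PowerSeries.rescale_mk] using h.rescale (inv_ne_zero hγ.ne')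

theorem not_algebraic_3412_general (r : ℕ) (hr4 : r < 4)
    (h : ∃ c C : ℝ, 0 < c ∧ 0 < C ∧ ∀ᶠ n : ℕ in atTop,
      c * 9 ^ n / (n : ℝ) ^ (4 - r) ≤ (occCard n r pat3412 : ℝ) ∧
      (occCard n r pat3412 : ℝ) ≤ C * 9 ^ n / (n : ℝ) ^ (4 - r)) :
    ¬ ∃ P : Polynomial (Polynomial ℝ), P ≠ 0 ∧
        Polynomial.eval₂ Polynomial.coeToPowerSeries.ringHom
          (PowerSeries.mk fun n => (occCard n r pat3412 : ℝ)) P = 0 := by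
  obtain ⟨c, C, hc, -, hbounds⟩ := h
  exact not_isAlgebraic_mk_of_bounds (by omega) (by norm_num) hc hbounds

/-- Theorem 5.8: for `1 ≤ r < 4`, given `c, C > 0` with
`c 9^n / n^{4-r} ≤ |S_{n,r}(3412)| ≤ C 9^n / n^{4-r}` for all large `n`, the ordinary
generating function of `|S_{n,r}(3412)|` is not algebraic. -/
theorem not_algebraic_3412 (r : ℕ) (hr : 1 ≤ r) (hr4 : r < 4)
    (h : ∃ c C : ℝ, 0 < c ∧ 0 < C ∧ ∀ᶠ n : ℕ in atTop,
      c * 9 ^ n / (n : ℝ) ^ (4 - r) ≤ (occCard n r pat3412 : ℝ) ∧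
      (occCard n r pat3412 : ℝ) ≤ C * 9 ^ n / (n : ℝ) ^ (4 - r)) :
    ¬ ∃ P : Polynomial (Polynomial ℝ), P ≠ 0 ∧
        Polynomial.eval₂ Polynomial.coeToPowerSeries.ringHom
          (PowerSeries.mk fun n => (occCard n r pat3412 : ℝ)) P = 0 :=
  not_algebraic_3412_general r hr4 h
end
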